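/- arXiv:2508.03574 — 9 statements merged into one kernel-verified Lean document; each statement's English description precedes it below -/
import Mathlib

section
/- There exist constants c₁ c₂ : ℕ such that for all t n : ℕ, every t × n integer matrix A and every c : Fin t → ℤ: if Sol(A,c) is nonempty, then there exists x ∈ Sol(A,c) such that the number of indices i with x i ≠ 0 is at most c₁ · t · (Nat.log 2 (c₂ · t · M) + 1), and x i ≤ c₁ · t · (t · M)^(c₂ · t) for every i, where M := max 1 (maximum of the absolute values of all entries of A and of c). -/
namespace SmallSolAux


lemma four_mul_le_two_pow_add (k : ℕ) : 4 * k ≤ 2 ^ k + 16 := by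
  induction k with
  | zero => norm_num
  | succ m ih =>
    rcases le_or_gt m 2 with h | h
    · interval_cases m <;> norm_num
    · have h2 : (4:ℕ) ≤ 2 ^ m := by
        calc (4:ℕ) ≤ 2^2 := by norm_num
        _ ≤ 2 ^ m := Nat.pow_le_pow_right (by norm_num) (by omega)
      have : 2 ^ (m+1) = 2^m + 2^m := by ring
      omega

lemma four_mul_log_le (u : ℕ) : 4 * Nat.log 2 u ≤ u + 16 := by
  rcases Nat.eq_zero_or_pos u with h | h
  · simp [h]
  · calc 4 * Nat.log 2 u ≤ 2 ^ (Nat.log 2 u) + 16 := four_mul_le_two_pow_add _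
    _ ≤ u + 16 := by
        have := Nat.pow_log_le_self 2 (by omega : u ≠ 0)
        omega

lemma log_mul_le {a b : ℕ} (ha : 1 ≤ a) (hb : 1 ≤ b) :
    Nat.log 2 (a * b) ≤ Nat.log 2 a + Nat.log 2 b + 1 := by
  have hab : a * b ≠ 0 := by positivity
  have h1 : a < 2 ^ (Nat.log 2 a + 1) := Nat.lt_pow_succ_log_self (by norm_num) a
  have h2 : b < 2 ^ (Nat.log 2 b + 1) := Nat.lt_pow_succ_log_self (by norm_num) b
  have : a * b < 2 ^ (Nat.log 2 a + Nat.log 2 b + 2) := by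
    calc a * b < 2 ^ (Nat.log 2 a + 1) * 2 ^ (Nat.log 2 b + 1) :=
      Nat.mul_lt_mul_of_lt_of_lt h1 h2
    _ = 2 ^ (Nat.log 2 a + Nat.log 2 b + 2) := by ring
  have := (Nat.log_lt_iff_lt_pow (by norm_num) hab).mpr this
  omega

lemma log_add_log_le {a b : ℕ} (ha : 1 ≤ a) (hb : 1 ≤ b) :
    Nat.log 2 a + Nat.log 2 b ≤ Nat.log 2 (a * b) := by
  have h1 : 2 ^ (Nat.log 2 a) ≤ a := Nat.pow_log_le_self 2 (by omega)
  have h2 : 2 ^ (Nat.log 2 b) ≤ b := Nat.pow_log_le_self 2 (by omega)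
  have : 2 ^ (Nat.log 2 a + Nat.log 2 b) ≤ a * b := by
    rw [pow_add]; exact Nat.mul_le_mul h1 h2
  exact (Nat.le_log_iff_pow_le (by norm_num) (by positivity)).mpr this

lemma le_of_le_mul_log {u a : ℕ} (ha : 1 ≤ a) (h : u ≤ a * Nat.log 2 u) :
    u ≤ a * (2 * Nat.log 2 a + 16) := by
  obtain ⟨v, hav, huv⟩ : ∃ v, a * v ≤ u ∧ u < a * (v + 1) :=
    ⟨u / a, Nat.mul_div_le u a, Nat.lt_mul_div_succ u (by omega)⟩
  -- log u ≤ log a + log (v+1) + 1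
  have hlog : Nat.log 2 u ≤ Nat.log 2 a + Nat.log 2 (v + 1) + 1 := by
    calc Nat.log 2 u ≤ Nat.log 2 (a * (v+1)) := Nat.log_mono_right (by omega)
    _ ≤ Nat.log 2 a + Nat.log 2 (v+1) + 1 := log_mul_le ha (by omega)
  have hlv : 4 * Nat.log 2 (v + 1) ≤ v + 17 := by
    have := four_mul_log_le (v + 1); omega
  -- from u ≤ a * log u :
  have key : a * v ≤ a * (Nat.log 2 a + Nat.log 2 (v+1) + 1) :=
    le_trans (le_trans hav h) (Nat.mul_le_mul_left a hlog)
  have hv2 : v ≤ Nat.log 2 a + Nat.log 2 (v+1) + 1 := Nat.le_of_mul_le_mul_left key (by omega)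
  -- so 4v ≤ 4 log a + v + 17 + 4, hence 3v ≤ 4 log a + 21, v ≤ 2 log a + 7
  have : 3 * v ≤ 4 * Nat.log 2 a + 21 := by omega
  have hvfin : v ≤ 2 * Nat.log 2 a + 7 := by omega
  have h8 : a * (v+1) ≤ a * (2 * Nat.log 2 a + 16) := Nat.mul_le_mul_left a (by omega)
  omega



open Matrix Finset

lemma exists_min_measure {α : Type*} (P : Set α) (h : P.Nonempty) (f : α → ℕ) :
    ∃ x ∈ P, ∀ z ∈ P, f x ≤ f z := by
  classical
  have hex : ∃ k, ∃ x ∈ P, f x = k := by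
    obtain ⟨x, hx⟩ := h; exact ⟨f x, x, hx, rfl⟩
  obtain ⟨x, hx, hfx⟩ := Nat.find_spec hex
  exact ⟨x, hx, fun z hz => by
    rw [hfx]; exact Nat.find_min' hex ⟨z, hz, rfl⟩⟩

lemma natAbs_sum_le' {ι : Type*} (s : Finset ι) (f : ι → ℤ) :
    (∑ i ∈ s, f i).natAbs ≤ ∑ i ∈ s, (f i).natAbs := by
  classical
  induction s using Finset.cons_induction with
  | empty => simp
  | cons a s ha ih =>
    rw [Finset.sum_cons, Finset.sum_cons]
    exact le_trans (Int.natAbs_add_le _ _) (by omega)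

lemma natAbs_prod' {ι : Type*} (s : Finset ι) (f : ι → ℤ) :
    (∏ i ∈ s, f i).natAbs = ∏ i ∈ s, (f i).natAbs :=
  map_prod Int.natAbsHom f s

lemma det_natAbs_le {ι : Type*} [Fintype ι] [DecidableEq ι] (N : Matrix ι ι ℤ) (b : ι → ℕ)
    (h : ∀ i j, (N i j).natAbs ≤ b j) :
    N.det.natAbs ≤ (Fintype.card ι).factorial * ∏ j, b j := by
  rw [Matrix.det_apply]
  calc (∑ σ : Equiv.Perm ι, Equiv.Perm.sign σ • ∏ i, N (σ i) i).natAbs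
      ≤ ∑ σ : Equiv.Perm ι, (Equiv.Perm.sign σ • ∏ i, N (σ i) i).natAbs := by
        apply natAbs_sum_le'
    _ ≤ ∑ _σ : Equiv.Perm ι, ∏ j, b j := by
        apply Finset.sum_le_sum
        intro σ _
        have h1 : (Equiv.Perm.sign σ • ∏ i, N (σ i) i).natAbs = (∏ i, N (σ i) i).natAbs := by
          rcases Int.units_eq_one_or (Equiv.Perm.sign σ) with hs | hs <;>
            simp [hs, Units.smul_def]
        rw [h1]
        calc (∏ i, N (σ i) i).natAbs = ∏ i, (N (σ i) i).natAbs := natAbs_prod' _ _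
        _ ≤ ∏ j, b j := Finset.prod_le_prod' fun j _ => h (σ j) j
    _ = (Fintype.card ι).factorial * ∏ j, b j := by
        rw [Finset.sum_const, Finset.card_univ, Fintype.card_perm, smul_eq_mul]

lemma dotProduct_natAbs_le {m : ℕ} (f g : Fin m → ℤ) (bf bg : ℕ)
    (hf : ∀ k, (f k).natAbs ≤ bf) (hg : ∀ k, (g k).natAbs ≤ bg) :
    (f ⬝ᵥ g).natAbs ≤ m * (bf * bg) := by
  unfold dotProduct
  calc (∑ k, f k * g k).natAbs ≤ ∑ k, (f k * g k).natAbs := natAbs_sum_le' _ _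
  _ ≤ ∑ _k : Fin m, bf * bg := Finset.sum_le_sum fun k _ => by
      rw [Int.natAbs_mul]; exact Nat.mul_le_mul (hf k) (hg k)
  _ = m * (bf * bg) := by simp [Finset.sum_const]

variable {t n : ℕ}

/-- extend a vector indexed by a finset by zero -/
def extend (L : Finset (Fin n)) (w : {i // i ∈ L} → ℤ) : Fin n → ℤ :=
  fun j => if h : j ∈ L then w ⟨j, h⟩ else 0

/-- the Gram matrix of the columns of `B` indexed by `L` -/
def gram (B : Matrix (Fin t) (Fin n) ℤ) (L : Finset (Fin n)) :
    Matrix {i // i ∈ L} {i // i ∈ L} ℤ :=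
  fun i j => (fun k => B k i.1) ⬝ᵥ (fun k => B k j.1)

lemma mulVec_extend (B : Matrix (Fin t) (Fin n) ℤ) (L : Finset (Fin n))
    (w : {i // i ∈ L} → ℤ) (k : Fin t) :
    B.mulVec (extend L w) k = ∑ j : {i // i ∈ L}, B k j.1 * w j := by
  classical
  have h1 : B.mulVec (extend L w) k = ∑ j ∈ Finset.univ, B k j * extend L w j := rfl
  rw [h1, ← Finset.sum_subset (Finset.subset_univ L)
    (fun x _ hx => by simp [extend, hx])]
  rw [← Finset.sum_attach L (fun j => B k j * extend L w j), Finset.univ_eq_attach]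
  exact Finset.sum_congr rfl fun j _ => by simp [extend, j.2]

lemma gram_mulVec (B : Matrix (Fin t) (Fin n) ℤ) (L : Finset (Fin n))
    (w : {i // i ∈ L} → ℤ) (u : {i // i ∈ L}) :
    (gram B L).mulVec w u = (fun k => B k u.1) ⬝ᵥ B.mulVec (extend L w) := by
  classical
  have hR : (fun k => B k u.1) ⬝ᵥ B.mulVec (extend L w)
      = ∑ k, B k u.1 * ∑ j : {i // i ∈ L}, B k j.1 * w j := by
    unfold dotProduct
    exact Finset.sum_congr rfl fun k _ => by rw [mulVec_extend]
  rw [hR]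
  show ∑ j : {i // i ∈ L}, gram B L u j * w j = _
  unfold gram dotProduct
  calc ∑ j : {i // i ∈ L}, (∑ k, B k u.1 * B k j.1) * w j
      = ∑ j : {i // i ∈ L}, ∑ k, B k u.1 * B k j.1 * w j := by
        exact Finset.sum_congr rfl fun j _ => Finset.sum_mul _ _ _
  _ = ∑ k, ∑ j : {i // i ∈ L}, B k u.1 * B k j.1 * w j := Finset.sum_comm
  _ = ∑ k, B k u.1 * ∑ j : {i // i ∈ L}, B k j.1 * w j := by
        exact Finset.sum_congr rfl fun k _ => by
          rw [Finset.mul_sum]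
          exact Finset.sum_congr rfl fun j _ => by ring

lemma gram_kernel {B : Matrix (Fin t) (Fin n) ℤ} {L : Finset (Fin n)}
    {u : {i // i ∈ L} → ℤ} (h : (gram B L).mulVec u = 0) :
    B.mulVec (extend L u) = 0 := by
  classical
  set z := B.mulVec (extend L u) with hz
  have hzz : z ⬝ᵥ z = 0 := by
    have h1 : z ⬝ᵥ z = ∑ k, (∑ j : {i // i ∈ L}, B k j.1 * u j) * z k := by
      unfold dotProduct
      exact Finset.sum_congr rfl fun k _ => by rw [hz, mulVec_extend]
    have h2 : ∑ k, (∑ j : {i // i ∈ L}, B k j.1 * u j) * z k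
        = ∑ j : {i // i ∈ L}, u j * ((fun k => B k j.1) ⬝ᵥ z) := by
      unfold dotProduct
      have hswap : ∑ k : Fin t, (∑ j : {i // i ∈ L}, B k j.1 * u j) * z k
          = ∑ k : Fin t, ∑ j : {i // i ∈ L}, B k j.1 * u j * z k :=
        Finset.sum_congr rfl fun k _ => Finset.sum_mul _ _ _
      rw [hswap, Finset.sum_comm]
      apply Finset.sum_congr rfl
      intro j _
      rw [Finset.mul_sum]
      apply Finset.sum_congr rfl
      intro k _
      ring
    rw [h1, h2]
    have h3 : ∀ j : {i // i ∈ L}, (fun k => B k j.1) ⬝ᵥ z = (gram B L).mulVec u j :=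
      fun j => (gram_mulVec B L u j).symm
    calc ∑ j : {i // i ∈ L}, u j * ((fun k => B k j.1) ⬝ᵥ z)
        = ∑ j : {i // i ∈ L}, u j * (gram B L).mulVec u j :=
          Finset.sum_congr rfl fun j _ => by rw [h3]
    _ = 0 := by rw [h]; simp
  exact dotProduct_self_eq_zero.mp hzz

/-- independence of the columns indexed by `L`, as a kernel-triviality statement -/
def IndepOn (B : Matrix (Fin t) (Fin n) ℤ) (L : Finset (Fin n)) : Prop :=
  ∀ u : {i // i ∈ L} → ℤ, B.mulVec (extend L u) = 0 → u = 0

lemma card_le_of_indep {B : Matrix (Fin t) (Fin n) ℤ} {L : Finset (Fin n)}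
    (h : IndepOn B L) : L.card ≤ t := by
  classical
  have hli : LinearIndependent ℤ (fun (i : {i // i ∈ L}) => (fun k => B k i.1 : Fin t → ℤ)) := by
    rw [Fintype.linearIndependent_iff]
    intro g hg
    have h0 : B.mulVec (extend L g) = 0 := by
      funext k
      rw [mulVec_extend]
      have := congrFun hg k
      simp only [Finset.sum_apply, Pi.smul_apply, smul_eq_mul, Pi.zero_apply] at this
      show ∑ j : {i // i ∈ L}, B k j.1 * g j = 0
      rw [← this]
      exact Finset.sum_congr rfl fun j _ => mul_comm _ _
    have := h g h0
    intro i; rw [this]; rfl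
  have hcard := hli.fintype_card_le_finrank
  rwa [Module.finrank_fintype_fun_eq_card, Fintype.card_coe, Fintype.card_fin] at hcard

lemma gram_det_ne_zero {B : Matrix (Fin t) (Fin n) ℤ} {L : Finset (Fin n)}
    (h : IndepOn B L) : (gram B L).det ≠ 0 := by
  classical
  intro h0
  obtain ⟨v, hvne, hv⟩ := Matrix.exists_mulVec_eq_zero_iff.mpr h0
  exact hvne (h v (gram_kernel hv))

lemma gram_entry_le {B : Matrix (Fin t) (Fin n) ℤ} {L : Finset (Fin n)} {M : ℕ}
    (hB : ∀ k i, (B k i).natAbs ≤ M) (u v : {i // i ∈ L}) :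
    ((gram B L) u v).natAbs ≤ t * (M * M) :=
  dotProduct_natAbs_le _ _ M M (fun k => hB k u.1) (fun k => hB k v.1)

lemma bounded_of_indep (A : Matrix (Fin t) (Fin n) ℤ) (M : ℕ) (hM : 1 ≤ M)
    (hA : ∀ k i, (A k i).natAbs ≤ M) {L : Finset (Fin n)}
    (indep : IndepOn A L)
    (w : Fin n → ℤ) (hw : ∀ i, i ∉ L → w i = 0) (C : ℕ)
    (hC : ∀ k, ((A.mulVec w) k).natAbs ≤ C) (i : Fin n) :
    (w i).natAbs ≤ t.factorial * (t * (M * M)) ^ t * C := by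
  classical
  by_cases hiL : i ∈ L
  swap
  · simp [hw i hiL]
  set G := gram A L with hG
  have hr : L.card ≤ t := card_le_of_indep indep
  have hr1 : 1 ≤ L.card := Finset.card_pos.mpr ⟨i, hiL⟩
  have ht1 : 1 ≤ t := le_trans hr1 hr
  have hdet : G.det ≠ 0 := gram_det_ne_zero indep
  set wL : {j // j ∈ L} → ℤ := fun j => w j.1 with hwL
  have hext : extend L wL = w := by
    funext j
    by_cases h : j ∈ L
    · simp [extend, h, hwL]
    · simp [extend, h, hw j h]
  set d : {j // j ∈ L} → ℤ := fun u => (fun k => A k u.1) ⬝ᵥ (A.mulVec w) with hd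
  have hsys : G.mulVec wL = d := by
    funext u
    rw [hG, gram_mulVec, hext]
  have hcr : G.det • wL = Matrix.cramer G d := by
    rw [← hsys, Matrix.cramer_eq_adjugate_mulVec, Matrix.mulVec_mulVec, Matrix.adjugate_mul,
      Matrix.smul_mulVec, Matrix.one_mulVec]
  set ii : {j // j ∈ L} := ⟨i, hiL⟩ with hii
  have hkey : (G.det * w i).natAbs
      ≤ L.card.factorial * ((t * (M * C)) * (t * (M * M)) ^ (L.card - 1)) := by
    have h1 : G.det * w i = Matrix.cramer G d ii := by
      have := congrFun hcr ii
      simpa [smul_eq_mul] using this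
    rw [h1, Matrix.cramer_apply]
    have h2 := det_natAbs_le (G.updateCol ii d)
      (fun j => if j = ii then t * (M * C) else t * (M * M))
      (by
        intro a j
        rw [Matrix.updateCol_apply]
        by_cases hj : j = ii
        · simp only [hj, if_pos rfl]
          exact dotProduct_natAbs_le _ _ M C (fun k => hA k a.1) hC
        · simp only [if_neg hj]
          exact gram_entry_le hA a j)
    refine le_trans h2 ?_
    rw [Fintype.card_coe]
    apply Nat.mul_le_mul_left
    have h3 : (∏ j : {j // j ∈ L}, if j = ii then t * (M * C) else t * (M * M))
        = (t * (M * C)) * (t * (M * M)) ^ (L.card - 1) := by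
      rw [← Finset.mul_prod_erase Finset.univ _ (Finset.mem_univ ii), if_pos rfl]
      congr 1
      rw [Finset.prod_congr rfl (fun j hj => if_neg (Finset.ne_of_mem_erase hj)),
        Finset.prod_const, Finset.card_erase_of_mem (Finset.mem_univ ii), Finset.card_univ,
        Fintype.card_coe]
    rw [h3]
  have habs : (w i).natAbs ≤ (G.det * w i).natAbs := by
    rw [Int.natAbs_mul]
    have : 1 ≤ G.det.natAbs := Int.natAbs_pos.mpr hdet
    exact Nat.le_mul_of_pos_left _ (by omega)
  refine le_trans habs (le_trans hkey ?_)
  have e1 : L.card.factorial ≤ t.factorial := Nat.factorial_le hr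
  have e2 : (t * (M * C)) * (t * (M * M)) ^ (L.card - 1)
      ≤ (t * (M * M)) ^ t * C := by
    have h4 : t * (M * C) ≤ (t * (M * M)) * C := by
      have h5 : M ≤ M * M := Nat.le_mul_of_pos_left M (by omega)
      calc t * (M * C) = (t * M) * C := by ring
      _ ≤ (t * (M * M)) * C := Nat.mul_le_mul_right C (Nat.mul_le_mul_left t h5)
    calc (t * (M * C)) * (t * (M * M)) ^ (L.card - 1)
        ≤ ((t * (M * M)) * C) * (t * (M * M)) ^ (L.card - 1) :=
          Nat.mul_le_mul_right _ h4
    _ = (t * (M * M)) ^ (L.card - 1 + 1) * C := by ring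
    _ ≤ (t * (M * M)) ^ t * C := by
        apply Nat.mul_le_mul_right
        apply Nat.pow_le_pow_right
        · nlinarith
        · omega
  calc L.card.factorial * ((t * (M * C)) * (t * (M * M)) ^ (L.card - 1))
      ≤ t.factorial * ((t * (M * M)) ^ t * C) := Nat.mul_le_mul e1 e2
  _ = t.factorial * (t * (M * M)) ^ t * C := by ring

lemma small_kernel (A : Matrix (Fin t) (Fin n) ℤ) (M : ℕ) (hM : 1 ≤ M) (ht : 1 ≤ t)
    (hA : ∀ k i, (A k i).natAbs ≤ M) {L : Finset (Fin n)} (q : Fin n → ℤ)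
    (hq0 : ∀ i, i ∉ L → q i = 0) (hqne : q ≠ 0) (hker : A.mulVec q = 0) :
    ∃ g : Fin n → ℤ, g ≠ 0 ∧ (∀ i, g i ≠ 0 → i ∈ L) ∧ A.mulVec g = 0 ∧
      ∀ i, (g i).natAbs ≤ t.factorial * (t * (M * M)) ^ t := by
  classical
  have htMM : 1 ≤ t * (M * M) := by nlinarith
  set P : Set (Fin n → ℤ) := {p | (∀ i, i ∉ L → p i = 0) ∧ p ≠ 0 ∧ A.mulVec p = 0} with hP
  obtain ⟨p, hpP, hpmin⟩ := exists_min_measure P ⟨q, hq0, hqne, hker⟩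
      (fun p => (Finset.univ.filter (fun i => p i ≠ 0)).card)
  obtain ⟨hp0, hpne, hpker⟩ := hpP
  obtain ⟨i₀, hi₀⟩ : ∃ i, p i ≠ 0 := by
    by_contra hc
    push_neg at hc
    exact hpne (funext fun i => hc i)
  set S : Finset (Fin n) := Finset.univ.filter (fun i => p i ≠ 0) with hS
  have hi₀S : i₀ ∈ S := by simp [hS, hi₀]
  set D : Finset (Fin n) := S.erase i₀ with hD
  have hi₀D : i₀ ∉ D := Finset.notMem_erase _ _
  have hDS : D ⊆ S := Finset.erase_subset _ _
  have hSL : ∀ i ∈ S, i ∈ L := by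
    intro i hi
    by_contra hc
    rw [hS, Finset.mem_filter] at hi
    exact hi.2 (hp0 i hc)
  have hSsupp : ∀ i, p i ≠ 0 → i ∈ S := by
    intro i hi; simp [hS, hi]
  -- independence on D
  have indep : IndepOn A D := by
    intro u hu
    by_contra hune
    obtain ⟨j, hj⟩ : ∃ j, u j ≠ 0 := by
      by_contra hc; push_neg at hc; exact hune (funext hc)
    set U := extend D u with hU
    have hUj : U j.1 = u j := by
      have := j.2
      simp [hU, extend, this]
    have hUsupp : ∀ i, U i ≠ 0 → i ∈ D := by
      intro i hi
      by_contra hc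
      rw [hU] at hi
      simp [extend, hc] at hi
    set p' : Fin n → ℤ := fun i => u j * p i - p j.1 * U i with hp'
    have hUker : A.mulVec U = 0 := hu
    have hp'P : p' ∈ P := by
      refine ⟨?_, ?_, ?_⟩
      · intro i hiL
        have h1 : p i = 0 := hp0 i hiL
        have h2 : U i = 0 := by
          by_contra hc
          exact hiL (hSL i (hDS (hUsupp i hc)))
        simp [hp', h1, h2]
      · intro hc
        have hzz := congrFun hc i₀
        have hUi₀ : U i₀ = 0 := by
          by_contra hcc
          exact hi₀D (hUsupp i₀ hcc)
        simp [hp', hUi₀] at hzz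
        rcases hzz with h | h
        exacts [hj h, hi₀ h]
      · funext k
        have h1 : A.mulVec p' k = u j * A.mulVec p k - p j.1 * A.mulVec U k := by
          show ∑ i, A k i * p' i = _
          have e1 : A.mulVec p k = ∑ i, A k i * p i := rfl
          have e2 : A.mulVec U k = ∑ i, A k i * U i := rfl
          rw [e1, e2, Finset.mul_sum, Finset.mul_sum, ← Finset.sum_sub_distrib]
          apply Finset.sum_congr rfl
          intro i _
          simp only [hp']
          ring
        rw [h1, hpker, hUker]
        simp
    have hcard : (Finset.univ.filter (fun i => p' i ≠ 0)).card < S.card := by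
      have hp'j : p' j.1 = 0 := by
        simp only [hp', hUj]
        ring
      have hsub : Finset.univ.filter (fun i => p' i ≠ 0) ⊆ S.erase j.1 := by
        intro i hi
        rw [Finset.mem_filter] at hi
        have hip : p' i ≠ 0 := hi.2
        have hiS : i ∈ S := by
          by_contra hc
          have h1 : p i = 0 := by
            by_contra hcc; exact hc (hSsupp i hcc)
          have h2 : U i = 0 := by
            by_contra hcc; exact hc (hDS (hUsupp i hcc))
          exact hip (by simp [hp', h1, h2])
        refine Finset.mem_erase.mpr ⟨?_, hiS⟩
        intro hij
        exact hip (hij ▸ hp'j)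
      calc (Finset.univ.filter (fun i => p' i ≠ 0)).card
          ≤ (S.erase j.1).card := Finset.card_le_card hsub
      _ < S.card := Finset.card_erase_lt_of_mem (hDS j.2)
    have := hpmin p' hp'P
    omega
  have hrt : D.card ≤ t := card_le_of_indep indep
  set G := gram A D with hG
  have hdet : G.det ≠ 0 := gram_det_ne_zero indep
  set wt : {i // i ∈ D} → ℤ := fun j => - p j.1 with hwt
  have hweq : ∀ k, A.mulVec (extend D wt) k = p i₀ * A k i₀ := by
    intro k
    rw [mulVec_extend]
    have h1 : ∑ j : Fin n, A k j * p j = 0 := congrFun hpker k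
    have h0 : ∑ j ∈ S, A k j * p j = 0 := by
      rw [← h1]
      apply Finset.sum_subset (Finset.subset_univ S)
      intro x _ hx
      have : p x = 0 := by
        by_contra hc; exact hx (hSsupp x hc)
      simp [this]
    have h2 : ∑ j ∈ S, A k j * p j = A k i₀ * p i₀ + ∑ j ∈ D, A k j * p j := by
      conv_lhs => rw [← Finset.insert_erase hi₀S]
      rw [Finset.sum_insert (Finset.notMem_erase _ _), hD]
    have h3 : ∑ j : {i // i ∈ D}, A k j.1 * wt j = - ∑ j ∈ D, A k j * p j := by
      rw [← Finset.sum_neg_distrib]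
      rw [← Finset.sum_attach D (fun j => -(A k j * p j)), Finset.univ_eq_attach]
      apply Finset.sum_congr rfl
      intro j _
      simp only [hwt]
      ring
    rw [h3]
    have : ∑ j ∈ D, A k j * p j = - (A k i₀ * p i₀) := by omega
    rw [this]
    ring
  set d : {i // i ∈ D} → ℤ := fun v => (fun k => A k v.1) ⬝ᵥ (fun k => A k i₀) with hd
  have hsys : G.mulVec wt = fun v => p i₀ * d v := by
    funext v
    rw [hG, gram_mulVec]
    show ∑ k, A k v.1 * (A.mulVec (extend D wt)) k = _
    have e1 : ∀ k, A k v.1 * (A.mulVec (extend D wt)) k = p i₀ * (A k v.1 * A k i₀) := by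
      intro k
      rw [hweq k]
      ring
    rw [Finset.sum_congr rfl (fun k _ => e1 k), ← Finset.mul_sum]
    rfl
  set g' := Matrix.cramer G d with hg'
  set a := G.det with ha
  have hpg : ∀ v, a * wt v = p i₀ * g' v := by
    have h1 : G.det • wt = Matrix.cramer G (G.mulVec wt) := by
      rw [Matrix.cramer_eq_adjugate_mulVec, Matrix.mulVec_mulVec, Matrix.adjugate_mul,
        Matrix.smul_mulVec, Matrix.one_mulVec]
    have h2 : Matrix.cramer G (G.mulVec wt) = p i₀ • Matrix.cramer G d := by
      rw [hsys]
      have e : (fun v => p i₀ * d v) = p i₀ • d := by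
        funext v; simp
      rw [e, LinearMap.map_smul]
    intro v
    have := congrFun (h1.trans h2) v
    simpa using this
  set g : Fin n → ℤ := fun i => if h : i ∈ D then g' ⟨i, h⟩ else if i = i₀ then -a else 0
    with hgdef
  have hgi₀ : g i₀ = -a := by
    simp [hgdef, hi₀D]
  have hgD : ∀ (i : Fin n) (h : i ∈ D), g i = g' ⟨i, h⟩ := by
    intro i h; simp [hgdef, h]
  refine ⟨g, ?_, ?_, ?_, ?_⟩
  · intro hc
    have := congrFun hc i₀
    rw [hgi₀] at this
    simp only [Pi.zero_apply, neg_eq_zero] at this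
    exact hdet this
  · intro i hgi
    by_cases h : i ∈ D
    · exact hSL i (hDS h)
    · by_cases h2 : i = i₀
      · exact h2 ▸ hSL i₀ hi₀S
      · exfalso; apply hgi; simp [hgdef, h, h2]
  · funext k
    show A.mulVec g k = 0
    have hsplit : A.mulVec g k = (∑ j : {i // i ∈ D}, A k j.1 * g' j) + A k i₀ * (-a) := by
      have h1 : A.mulVec g k = ∑ j ∈ insert i₀ D, A k j * g j := by
        show ∑ j : Fin n, A k j * g j = _
        symm
        apply Finset.sum_subset (Finset.subset_univ _)
        intro x _ hx
        rw [Finset.mem_insert] at hx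
        push_neg at hx
        have : g x = 0 := by simp [hgdef, hx.2, hx.1]
        simp [this]
      rw [h1, Finset.sum_insert hi₀D, hgi₀]
      have h2 : ∑ j ∈ D, A k j * g j = ∑ j : {i // i ∈ D}, A k j.1 * g' j := by
        rw [← Finset.sum_attach D (fun j => A k j * g j), Finset.univ_eq_attach]
        apply Finset.sum_congr rfl
        intro j _
        rw [hgD j.1 j.2]
      rw [h2]
      ring
    have hmain : p i₀ * A.mulVec g k = 0 := by
      rw [hsplit, mul_add]
      have h2 : p i₀ * ∑ j : {i // i ∈ D}, A k j.1 * g' j = a * (p i₀ * A k i₀) := by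
        rw [Finset.mul_sum]
        have e : ∀ j : {i // i ∈ D}, p i₀ * (A k j.1 * g' j) = A k j.1 * (a * wt j) := by
          intro j; rw [hpg j]; ring
        rw [Finset.sum_congr rfl (fun j _ => e j)]
        have h3 : ∑ j : {i // i ∈ D}, A k j.1 * (a * wt j)
            = a * ∑ j : {i // i ∈ D}, A k j.1 * wt j := by
          rw [Finset.mul_sum]
          exact Finset.sum_congr rfl fun j _ => by ring
        rw [h3, ← mulVec_extend, hweq]
      rw [h2]
      ring
    rcases mul_eq_zero.mp hmain with h | h
    · exact absurd h hi₀
    · exact h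
  · intro i
    have hbd : ∀ (v : {i // i ∈ D}),
        (g' v).natAbs ≤ t.factorial * (t * (M * M)) ^ t := by
      intro v
      rw [hg', Matrix.cramer_apply]
      have h2 := det_natAbs_le ((gram A D).updateCol v d) (fun _ => t * (M * M))
        (by
          intro u v'
          rw [Matrix.updateCol_apply]
          by_cases hv : v' = v
          · simp only [if_pos hv]
            exact dotProduct_natAbs_le _ _ M M (fun k => hA k u.1) (fun k => hA k i₀)
          · simp only [if_neg hv]
            exact gram_entry_le hA u v')
      refine le_trans h2 ?_
      rw [Finset.prod_const, Finset.card_univ, Fintype.card_coe]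
      exact Nat.mul_le_mul (Nat.factorial_le hrt) (Nat.pow_le_pow_right htMM hrt)
    have hbda : a.natAbs ≤ t.factorial * (t * (M * M)) ^ t := by
      have h3 := det_natAbs_le (gram A D) (fun _ => t * (M * M))
        (fun u v => gram_entry_le hA u v)
      refine le_trans h3 ?_
      rw [Finset.prod_const, Finset.card_univ, Fintype.card_coe]
      exact Nat.mul_le_mul (Nat.factorial_le hrt) (Nat.pow_le_pow_right htMM hrt)
    by_cases h : i ∈ D
    · rw [hgD i h]; exact hbd _
    · by_cases h2 : i = i₀
      · rw [h2, hgi₀, Int.natAbs_neg]; exact hbda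
      · have : g i = 0 := by simp [hgdef, h, h2]
        simp [this]

lemma reduce (A : Matrix (Fin t) (Fin n) ℤ) (c : Fin t → ℤ) (B : ℕ)
    (y : Fin n → ℕ) (hy : A.mulVec (fun i => (y i : ℤ)) = c)
    (g : Fin n → ℤ) (hgker : A.mulVec g = 0)
    (hsupp : ∀ i, g i ≠ 0 → B < y i)
    (hbd : ∀ i, (g i).natAbs ≤ B + 1)
    (hpos : ∃ i, 0 < g i) (hsum : 0 ≤ ∑ i, g i) :
    ∃ y' : Fin n → ℕ, A.mulVec (fun i => (y' i : ℤ)) = c ∧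
      (∀ i, y' i ≠ 0 → y i ≠ 0) ∧
      (∑ i, y' i) * (n + 1) + (Finset.univ.filter (fun i => B < y' i)).card
        < (∑ i, y i) * (n + 1) + (Finset.univ.filter (fun i => B < y i)).card := by
  classical
  have main : ∀ k : ℕ, (∀ i, (k : ℤ) * g i ≤ (y i : ℤ)) →
      ∃ y' : Fin n → ℕ, (∀ i, (y' i : ℤ) = (y i : ℤ) - k * g i) ∧
        A.mulVec (fun i => (y' i : ℤ)) = c ∧ (∀ i, y' i ≠ 0 → y i ≠ 0) := by
    intro k hk
    have hcast : ∀ i, ((((y i : ℤ) - k * g i).toNat : ℤ)) = (y i : ℤ) - k * g i := by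
      intro i
      apply Int.toNat_of_nonneg
      have := hk i
      linarith
    refine ⟨fun i => ((y i : ℤ) - k * g i).toNat, hcast, ?_, ?_⟩
    · have hz : (fun i => ((((y i : ℤ) - k * g i).toNat : ℕ) : ℤ))
          = (fun i => (y i : ℤ)) - (k : ℤ) • g := by
        funext i
        rw [hcast i]
        simp
      rw [hz, Matrix.mulVec_sub, Matrix.mulVec_smul, hy, hgker]
      simp
    · intro i h
      by_cases hgi : g i = 0
      · intro h0
        apply h
        have : (y i : ℤ) - k * g i = 0 := by rw [hgi, h0]; ring
        simp [this]
      · have := hsupp i hgi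
        omega
  rcases lt_or_eq_of_le hsum with hspos | hszero
  · -- case ∑ g > 0 : use k = 1
    have hk : ∀ i, (1 : ℤ) * g i ≤ (y i : ℤ) := by
      intro i
      rcases le_or_gt (g i) 0 with h | h
      · have : (0:ℤ) ≤ (y i : ℤ) := Int.natCast_nonneg _
        linarith
      · have h1 := hsupp i (by omega)
        have h2 := hbd i
        have h3 : g i ≤ (B : ℤ) + 1 := by omega
        have : (B : ℤ) + 1 ≤ (y i : ℤ) := by exact_mod_cast Nat.succ_le_of_lt h1
        linarith
    obtain ⟨y', hcast, hsol, hsupp'⟩ := main 1 hk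
    refine ⟨y', hsol, hsupp', ?_⟩
    have hsum' : (∑ i, y' i : ℤ) = (∑ i, y i : ℤ) - ∑ i, g i := by
      push_cast
      rw [Finset.sum_congr rfl (fun i _ => hcast i)]
      rw [Finset.sum_sub_distrib]
      simp
    have hlt : ∑ i, y' i < ∑ i, y i := by
      have h1 : (∑ i, y' i : ℤ) < (∑ i, y i : ℤ) := by
        rw [hsum']
        linarith
      exact_mod_cast h1
    have hcard' : (Finset.univ.filter (fun i => B < y' i)).card ≤ n := by
      calc (Finset.univ.filter (fun i => B < y' i)).card
          ≤ Finset.univ.card := Finset.card_filter_le _ _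
      _ = n := by rw [Finset.card_univ, Fintype.card_fin]
    calc (∑ i, y' i) * (n + 1) + (Finset.univ.filter (fun i => B < y' i)).card
        ≤ (∑ i, y' i) * (n + 1) + n := by omega
    _ < (∑ i, y' i + 1) * (n + 1) := by
        rw [Nat.succ_mul]
        omega
    _ ≤ (∑ i, y i) * (n + 1) := Nat.mul_le_mul_right _ (by omega)
    _ ≤ (∑ i, y i) * (n + 1) + (Finset.univ.filter (fun i => B < y i)).card :=
        Nat.le_add_right _ _
  · -- case ∑ g = 0
    set P : Finset (Fin n) := Finset.univ.filter (fun i => 0 < g i) with hPdef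
    have hPne : P.Nonempty := by
      obtain ⟨i, hi⟩ := hpos
      exact ⟨i, by simp [hPdef, hi]⟩
    obtain ⟨istar, histar, hminstar⟩ :=
      Finset.exists_min_image P (fun i => y i / (g i).toNat) hPne
    have hgstar : 0 < g istar := by
      rw [hPdef, Finset.mem_filter] at histar
      exact histar.2
    set k : ℕ := y istar / (g istar).toNat with hkdef
    have hk : ∀ i, (k : ℤ) * g i ≤ (y i : ℤ) := by
      intro i
      rcases le_or_gt (g i) 0 with h | h
      · have h0 : (k : ℤ) * g i ≤ 0 := by
          apply mul_nonpos_of_nonneg_of_nonpos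
          · exact Int.natCast_nonneg _
          · exact h
        have : (0:ℤ) ≤ (y i : ℤ) := Int.natCast_nonneg _
        linarith
      · have hiP : i ∈ P := by simp [hPdef, h]
        have hle := hminstar i hiP
        have hgN : 0 < (g i).toNat := by omega
        have h1 : k * (g i).toNat ≤ y i := by
          rw [← Nat.le_div_iff_mul_le hgN]
          exact le_trans hle (le_refl _)
        have h2 : ((g i).toNat : ℤ) = g i := Int.toNat_of_nonneg (by omega)
        calc (k : ℤ) * g i = ((k * (g i).toNat : ℕ) : ℤ) := by
              push_cast
              rw [h2]
        _ ≤ (y i : ℤ) := by exact_mod_cast h1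
    obtain ⟨y', hcast, hsol, hsupp'⟩ := main k hk
    refine ⟨y', hsol, hsupp', ?_⟩
    have hsum' : ∑ i, y' i = ∑ i, y i := by
      have h1 : (∑ i, y' i : ℤ) = (∑ i, y i : ℤ) - k * ∑ i, g i := by
        push_cast
        rw [Finset.sum_congr rfl (fun i _ => hcast i), Finset.sum_sub_distrib,
          ← Finset.mul_sum]
      rw [← hszero] at h1
      simp at h1
      exact_mod_cast h1
    -- y' istar ≤ B
    have hstar' : y' istar ≤ B := by
      have hgN : 0 < (g istar).toNat := by omega
      have h2 : ((g istar).toNat : ℤ) = g istar := Int.toNat_of_nonneg (by omega)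
      have h3 : (y' istar : ℤ) = (y istar : ℤ) - (((g istar).toNat * k : ℕ) : ℤ) := by
        rw [hcast istar]
        push_cast [h2]
        ring
      have h4 : (g istar).toNat * k + y istar % (g istar).toNat = y istar := by
        rw [hkdef]
        exact Nat.div_add_mod _ _
      have h5 : y istar % (g istar).toNat < (g istar).toNat := Nat.mod_lt _ hgN
      have h6 : (g istar).toNat ≤ B + 1 := by
        have := hbd istar
        omega
      omega
    have hsub : Finset.univ.filter (fun i => B < y' i)
        ⊆ (Finset.univ.filter (fun i => B < y i)).erase istar := by
      intro i hi
      rw [Finset.mem_filter] at hi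
      have hBi : B < y' i := hi.2
      have hine : i ≠ istar := by
        intro h
        rw [h] at hBi
        omega
      refine Finset.mem_erase.mpr ⟨hine, ?_⟩
      rw [Finset.mem_filter]
      refine ⟨Finset.mem_univ _, ?_⟩
      by_cases hgi : g i = 0
      · have he : (y' i : ℤ) = (y i : ℤ) := by rw [hcast i, hgi]; ring
        have he2 : y' i = y i := by exact_mod_cast he
        omega
      · exact hsupp i hgi
    have histar2 : istar ∈ Finset.univ.filter (fun i => B < y i) := by
      rw [Finset.mem_filter]
      exact ⟨Finset.mem_univ _, hsupp istar (by omega)⟩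
    have hcardlt : (Finset.univ.filter (fun i => B < y' i)).card
        < (Finset.univ.filter (fun i => B < y i)).card := by
      calc (Finset.univ.filter (fun i => B < y' i)).card
          ≤ ((Finset.univ.filter (fun i => B < y i)).erase istar).card :=
            Finset.card_le_card hsub
      _ < _ := Finset.card_erase_lt_of_mem histar2
    rw [hsum']
    omega

lemma no_kernel_vector (A : Matrix (Fin t) (Fin n) ℤ) (c : Fin t → ℤ) (B : ℕ)
    (P : Set (Fin n → ℕ))
    (hP : ∀ y ∈ P, ∀ y' : Fin n → ℕ, A.mulVec (fun i => (y' i : ℤ)) = c →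
      (∀ i, y' i ≠ 0 → y i ≠ 0) → y' ∈ P)
    (y : Fin n → ℕ) (hyP : y ∈ P) (hysol : A.mulVec (fun i => (y i : ℤ)) = c)
    (hymin : ∀ z ∈ P,
      (∑ i, y i) * (n + 1) + (Finset.univ.filter (fun i => B < y i)).card
        ≤ (∑ i, z i) * (n + 1) + (Finset.univ.filter (fun i => B < z i)).card)
    (g : Fin n → ℤ) (hker : A.mulVec g = 0) (hsupp : ∀ i, g i ≠ 0 → B < y i)
    (hbd : ∀ i, (g i).natAbs ≤ B + 1) (hgne : g ≠ 0) : False := by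
  classical
  have hgex : ∃ i, g i ≠ 0 := by
    by_contra hc; push_neg at hc; exact hgne (funext hc)
  have hnegker : A.mulVec (-g) = 0 := by
    rw [Matrix.mulVec_neg, hker]; simp
  have hnegsupp : ∀ i, (-g) i ≠ 0 → B < y i := by
    intro i hi
    apply hsupp
    simpa using hi
  have hnegbd : ∀ i, ((-g) i).natAbs ≤ B + 1 := by
    intro i
    simpa using hbd i
  have hposof : ∀ h : Fin n → ℤ, 0 < ∑ i, h i → ∃ i, 0 < h i := by
    intro h hh
    by_contra hc
    push_neg at hc
    have : ∑ i, h i ≤ 0 := Finset.sum_nonpos fun i _ => hc i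
    omega
  have finish : ∀ h : Fin n → ℤ, A.mulVec h = 0 → (∀ i, h i ≠ 0 → B < y i) →
      (∀ i, (h i).natAbs ≤ B + 1) → (∃ i, 0 < h i) → 0 ≤ ∑ i, h i → False := by
    intro h h1 h2 h3 h4 h5
    obtain ⟨y', hsol', hsupp', hlt⟩ := reduce A c B y hysol h h1 h2 h3 h4 h5
    have hy'P : y' ∈ P := hP y hyP y' hsol' hsupp'
    have := hymin y' hy'P
    omega
  rcases lt_trichotomy (∑ i, g i) 0 with hs | hs | hs
  · -- use -g
    have hsum : 0 ≤ ∑ i, (-g) i := by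
      simp only [Pi.neg_apply, Finset.sum_neg_distrib]
      omega
    have hpos : ∃ i, 0 < (-g) i := by
      apply hposof
      simp only [Pi.neg_apply, Finset.sum_neg_distrib]
      omega
    exact finish (-g) hnegker hnegsupp hnegbd hpos hsum
  · -- sum zero : pick sign from a nonzero entry
    obtain ⟨i, hi⟩ := hgex
    rcases lt_or_gt_of_ne hi with hneg | hpos
    · have hsum : 0 ≤ ∑ i, (-g) i := by
        simp only [Pi.neg_apply, Finset.sum_neg_distrib]
        omega
      exact finish (-g) hnegker hnegsupp hnegbd ⟨i, by simpa using hneg⟩ hsum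
    · exact finish g hker hsupp hbd ⟨i, hpos⟩ (le_of_eq hs.symm)
  · exact finish g hker hsupp hbd (hposof g hs) (le_of_lt hs)

lemma pigeonhole_kernel (A : Matrix (Fin t) (Fin n) ℤ) (M : ℕ)
    (hA : ∀ k i, (A k i).natAbs ≤ M) (S : Finset (Fin n))
    (hbig : (2 * S.card * M + 1) ^ t < 2 ^ S.card) :
    ∃ g : Fin n → ℤ, g ≠ 0 ∧ (∀ i, g i ≠ 0 → i ∈ S) ∧ A.mulVec g = 0 ∧
      (∀ i, (g i).natAbs ≤ 1) := by
  classical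
  set s := S.card with hs
  set F : Finset (Fin n) → (Fin t → ℤ) := fun T => fun k => ∑ i ∈ T, A k i with hF
  set target := Fintype.piFinset (fun _ : Fin t => Finset.Icc (-(s * M : ℤ)) (s * M))
    with htar
  have hmaps : ∀ T ∈ S.powerset, F T ∈ target := by
    intro T hT
    rw [htar, Fintype.mem_piFinset]
    intro k
    rw [Finset.mem_Icc]
    have h1 : (F T k).natAbs ≤ s * M := by
      calc (∑ i ∈ T, A k i).natAbs ≤ ∑ i ∈ T, (A k i).natAbs := natAbs_sum_le' _ _
      _ ≤ ∑ _i ∈ T, M := Finset.sum_le_sum fun i _ => hA k i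
      _ = T.card * M := by rw [Finset.sum_const, smul_eq_mul]
      _ ≤ s * M := Nat.mul_le_mul_right M (Finset.card_le_card (Finset.mem_powerset.mp hT))
    have h2 : |F T k| ≤ (s * M : ℤ) := by
      rw [Int.abs_eq_natAbs]
      exact_mod_cast h1
    rw [abs_le] at h2
    exact h2
  have hcards : target.card < S.powerset.card := by
    rw [Finset.card_powerset, htar, Fintype.card_piFinset]
    have h3 : (∏ _k : Fin t, (Finset.Icc (-(s * M : ℤ)) (s * M)).card)
        = (2 * s * M + 1) ^ t := by
      rw [Finset.prod_const, Finset.card_univ, Fintype.card_fin]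
      congr 1
      rw [Int.card_Icc]
      have h4 : ((s * M : ℤ) + 1 - (-(s * M : ℤ))) = ((2 * s * M + 1 : ℕ) : ℤ) := by
        push_cast
        ring
      rw [h4, Int.toNat_natCast]
    rw [h3]
    exact hbig
  obtain ⟨T₁, hT₁, T₂, hT₂, hne, hFeq⟩ :=
    Finset.exists_ne_map_eq_of_card_lt_of_maps_to hcards hmaps
  have key : ∀ U₁ U₂ : Finset (Fin n), U₁ ∈ S.powerset → U₂ ∈ S.powerset →
      F U₁ = F U₂ → U₁ ≠ U₂ → U₂.card ≤ U₁.card →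
      ∃ g : Fin n → ℤ, g ≠ 0 ∧ (∀ i, g i ≠ 0 → i ∈ S) ∧ A.mulVec g = 0 ∧
        (∀ i, (g i).natAbs ≤ 1) := by
    intro U₁ U₂ hU₁ hU₂ hFeq' hne' hcard
    set g : Fin n → ℤ :=
      fun i => (if i ∈ U₁ then (1 : ℤ) else 0) - (if i ∈ U₂ then (1 : ℤ) else 0) with hg
    have hdiff : (U₁ \ U₂).Nonempty := by
      rw [Finset.sdiff_nonempty]
      intro hsub
      exact hne' (Finset.eq_of_subset_of_card_le hsub hcard)
    obtain ⟨i₁, hi₁⟩ := hdiff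
    rw [Finset.mem_sdiff] at hi₁
    refine ⟨g, ?_, ?_, ?_, ?_⟩
    · intro hc
      have := congrFun hc i₁
      rw [hg] at this
      simp [hi₁.1, hi₁.2] at this
    · intro i hgi
      by_contra hiS
      have h1 : i ∉ U₁ := fun hh => hiS (Finset.mem_powerset.mp hU₁ hh)
      have h2 : i ∉ U₂ := fun hh => hiS (Finset.mem_powerset.mp hU₂ hh)
      apply hgi
      rw [hg]
      simp [h1, h2]
    · funext k
      have hsum : ∀ U : Finset (Fin n),
          ∑ i, A k i * (if i ∈ U then (1 : ℤ) else 0) = ∑ i ∈ U, A k i := by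
        intro U
        simp only [mul_ite, mul_one, mul_zero]
        rw [Finset.sum_ite_mem, Finset.univ_inter]
      have h5 : A.mulVec g k = ∑ i ∈ U₁, A k i - ∑ i ∈ U₂, A k i := by
        show ∑ i, A k i * g i = _
        simp only [hg]
        rw [← hsum U₁, ← hsum U₂, ← Finset.sum_sub_distrib]
        apply Finset.sum_congr rfl
        intro i _
        ring
      rw [h5]
      have h6 := congrFun hFeq' k
      rw [hF] at h6
      simp only at h6
      rw [h6]
      simp
    · intro i
      rw [hg]
      by_cases h1 : i ∈ U₁ <;> by_cases h2 : i ∈ U₂ <;> simp [h1, h2]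
  rcases le_total (T₂.card) (T₁.card) with h | h
  · exact key T₁ T₂ hT₁ hT₂ hFeq hne h
  · exact key T₂ T₁ hT₂ hT₁ hFeq.symm (Ne.symm hne) h


end SmallSolAux

/-- The maximum of the absolute values of the entries of an integer matrix
(`0` for an empty matrix). -/
def matNorm {m n : ℕ} (A : Matrix (Fin m) (Fin n) ℤ) : ℕ :=
  Finset.univ.sup fun p : Fin m × Fin n => (A p.1 p.2).natAbs

/-- The maximum of the absolute values of the entries of an integer vector. -/
def vecNorm {m : ℕ} (c : Fin m → ℤ) : ℕ :=
  Finset.univ.sup fun i => (c i).natAbs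

/-- The set of solutions over `ℕ` of the integer linear system `A x = c`. -/
def Sol {m n : ℕ} (A : Matrix (Fin m) (Fin n) ℤ) (c : Fin m → ℤ) : Set (Fin n → ℕ) :=
  {x | A.mulVec (fun i => (x i : ℤ)) = c}

open SmallSolAux

theorem small_solutions_of_integer_linear_systems :
    ∃ c₁ c₂ : ℕ, ∀ (t n : ℕ) (A : Matrix (Fin t) (Fin n) ℤ) (c : Fin t → ℤ),
      (Sol A c).Nonempty →
      ∃ x ∈ Sol A c,
        (Finset.univ.filter fun i => x i ≠ 0).card ≤
          c₁ * t * (Nat.log 2 (c₂ * t * max 1 (max (matNorm A) (vecNorm c))) + 1) ∧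
        ∀ i, x i ≤ c₁ * t * (t * max 1 (max (matNorm A) (vecNorm c))) ^ (c₂ * t) := by
  classical
  refine ⟨1000000, 1000000, ?_⟩
  intro t n A c hne
  set M := max 1 (max (matNorm A) (vecNorm c)) with hMdef
  have hM : 1 ≤ M := le_max_left _ _
  have hA : ∀ k i, (A k i).natAbs ≤ M := by
    intro k i
    have h1 : (A k i).natAbs ≤ matNorm A :=
      Finset.le_sup (f := fun p : Fin t × Fin n => (A p.1 p.2).natAbs) (Finset.mem_univ (k, i))
    exact le_trans h1 (le_trans (le_max_left _ _) (le_max_right _ _))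
  have hcb : ∀ k, (c k).natAbs ≤ M := by
    intro k
    have h1 : (c k).natAbs ≤ vecNorm c :=
      Finset.le_sup (f := fun i => (c i).natAbs) (Finset.mem_univ k)
    exact le_trans h1 (le_trans (le_max_right _ _) (le_max_right _ _))
  rcases Nat.eq_zero_or_pos t with ht0 | ht
  · subst ht0
    refine ⟨fun _ => 0, ?_, ?_, ?_⟩
    · show A.mulVec _ = c
      funext k
      exact k.elim0
    · simp
    · intro i; simp
  -- phase 1 : a solution with small support
  obtain ⟨y₁, hy₁Sol, hy₁min⟩ := exists_min_measure (Sol A c) hne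
    (fun y => (∑ i, y i) * (n + 1) + (Finset.univ.filter (fun i => 0 < y i)).card)
  have hy₁sol : A.mulVec (fun i => (y₁ i : ℤ)) = c := hy₁Sol
  set S : Finset (Fin n) := Finset.univ.filter (fun i => 0 < y₁ i) with hSdef
  set s := S.card with hsdef
  have claim1 : 2 ^ s ≤ (2 * s * M + 1) ^ t := by
    by_contra hbig
    push_neg at hbig
    obtain ⟨g, hgne, hgsupp, hgker, hgbd⟩ := pigeonhole_kernel A M hA S hbig
    refine no_kernel_vector A c 0 (Sol A c) ?_ y₁ hy₁Sol hy₁sol hy₁min g hgker ?_ ?_ hgne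
    · intro y _ y' hsol' _
      exact hsol'
    · intro i hi
      have h2 := hgsupp i hi
      rw [hSdef, Finset.mem_filter] at h2
      exact h2.2
    · intro i
      exact hgbd i
  -- support bound from claim1
  have hsb : s ≤ 44 * (t * Nat.log 2 (3 * M)) + 44 * (t * Nat.log 2 t) + 44 * t := by
    rcases Nat.eq_zero_or_pos s with hs0 | hs1
    · omega
    have h3M : 1 ≤ 3 * M := by omega
    have h1 : 2 ^ s ≤ (3 * s * M) ^ t := by
      refine le_trans claim1 (Nat.pow_le_pow_left (by nlinarith) t)
    have h2 : 3 * s * M < 2 ^ (Nat.log 2 (3 * s * M) + 1) :=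
      Nat.lt_pow_succ_log_self (by norm_num) _
    have h3 : 2 ^ s < 2 ^ ((Nat.log 2 (3 * s * M) + 1) * t) := by
      calc 2 ^ s ≤ (3 * s * M) ^ t := h1
      _ < (2 ^ (Nat.log 2 (3 * s * M) + 1)) ^ t := Nat.pow_lt_pow_left h2 (by omega)
      _ = 2 ^ ((Nat.log 2 (3 * s * M) + 1) * t) := by rw [← pow_mul]
    have h4 : s < (Nat.log 2 (3 * s * M) + 1) * t :=
      (Nat.pow_lt_pow_iff_right (by norm_num)).mp h3
    have h5 : Nat.log 2 (3 * s * M) ≤ Nat.log 2 (3 * M) + Nat.log 2 s + 1 := by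
      have he : 3 * s * M = (3 * M) * s := by ring
      rw [he]
      exact log_mul_le h3M hs1
    have h6 : s ≤ t * Nat.log 2 s + (t * Nat.log 2 (3 * M) + 2 * t) := by
      have h7 : (Nat.log 2 (3 * s * M) + 1) * t
          ≤ (Nat.log 2 (3 * M) + Nat.log 2 s + 2) * t := by
        apply Nat.mul_le_mul_right
        omega
      have h8 : (Nat.log 2 (3 * M) + Nat.log 2 s + 2) * t
          = t * Nat.log 2 s + (t * Nat.log 2 (3 * M) + 2 * t) := by ring
      omega
    rcases le_or_gt s (2 * (t * Nat.log 2 (3 * M) + 2 * t)) with hcase | hcase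
    · omega
    · have h9 : s ≤ 2 * t * Nat.log 2 s := by
        have heq : 2 * t * Nat.log 2 s = 2 * (t * Nat.log 2 s) := by ring
        omega
      have h10 := le_of_le_mul_log (by omega : 1 ≤ 2 * t) h9
      have h11 : Nat.log 2 (2 * t) ≤ Nat.log 2 t + 2 := by
        have h12 := log_mul_le (by norm_num : (1:ℕ) ≤ 2) (by omega : 1 ≤ t)
        have hl2 : Nat.log 2 2 = 1 := by
          simpa using Nat.log_pow (by norm_num : 1 < 2) 1
        omega
      have h13 : 2 * t * (2 * Nat.log 2 (2 * t) + 16)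
          = 4 * (t * Nat.log 2 (2 * t)) + 32 * t := by ring
      have h14 : t * Nat.log 2 (2 * t) ≤ t * Nat.log 2 t + 2 * t := by
        calc t * Nat.log 2 (2 * t) ≤ t * (Nat.log 2 t + 2) := Nat.mul_le_mul_left t h11
        _ = t * Nat.log 2 t + 2 * t := by ring
      omega
  -- phase 2 : minimize among solutions supported inside the support of y₁
  set B := t.factorial * (t * (M * M)) ^ t with hBdef
  set P2 : Set (Fin n → ℕ) := {y | y ∈ Sol A c ∧ ∀ i, y i ≠ 0 → y₁ i ≠ 0} with hP2
  have hy₁P2 : y₁ ∈ P2 := ⟨hy₁Sol, fun i h => h⟩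
  obtain ⟨y₂, hy₂P2, hy₂min⟩ := exists_min_measure P2 ⟨y₁, hy₁P2⟩
    (fun y => (∑ i, y i) * (n + 1) + (Finset.univ.filter (fun i => B < y i)).card)
  obtain ⟨hy₂Sol, hy₂supp⟩ := hy₂P2
  have hy₂sol : A.mulVec (fun i => (y₂ i : ℤ)) = c := hy₂Sol
  set L : Finset (Fin n) := Finset.univ.filter (fun i => B < y₂ i) with hLdef
  have hP2closed : ∀ y ∈ P2, ∀ y' : Fin n → ℕ, A.mulVec (fun i => (y' i : ℤ)) = c →
      (∀ i, y' i ≠ 0 → y i ≠ 0) → y' ∈ P2 := by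
    rintro y ⟨hysol', hysupp'⟩ y' hsol' hsupp'
    exact ⟨hsol', fun i h => hysupp' i (hsupp' i h)⟩
  have hindep : IndepOn A L := by
    by_contra hdep
    unfold IndepOn at hdep
    push_neg at hdep
    obtain ⟨u, hu, hune⟩ := hdep
    obtain ⟨j, hj⟩ : ∃ j, u j ≠ 0 := by
      by_contra hcc; push_neg at hcc; exact hune (funext hcc)
    have hqne : extend L u ≠ 0 := by
      intro hcc
      apply hj
      have h2 := congrFun hcc j.1
      simpa [extend, j.2] using h2
    have hq0 : ∀ i, i ∉ L → extend L u i = 0 := fun i hi => by simp [extend, hi]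
    obtain ⟨g, hgne, hgsupp, hgker, hgbd⟩ :=
      small_kernel A M hM ht hA (extend L u) hq0 hqne hu
    refine no_kernel_vector A c B P2 hP2closed y₂ ⟨hy₂Sol, hy₂supp⟩ hy₂sol hy₂min
      g hgker ?_ ?_ hgne
    · intro i hi
      have h2 := hgsupp i hi
      rw [hLdef, Finset.mem_filter] at h2
      exact h2.2
    · intro i
      have h2 := hgbd i
      omega
  have hLcard : L.card ≤ t := card_le_of_indep hindep
  -- the entries of y₂ are bounded
  set w : Fin n → ℤ := fun i => if i ∈ L then (y₂ i : ℤ) else 0 with hw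
  have hw0 : ∀ i, i ∉ L → w i = 0 := fun i hi => by simp [hw, hi]
  set C := M + s * (B * M) with hCdef
  have hCbound : ∀ k, ((A.mulVec w) k).natAbs ≤ C := by
    intro k
    set v : Fin n → ℤ := fun i => if i ∈ L then 0 else (y₂ i : ℤ) with hv
    have hwv : (fun i => (y₂ i : ℤ)) = w + v := by
      funext i
      by_cases h : i ∈ L <;> simp [hw, hv, h]
    have h1 : A.mulVec w k = c k - A.mulVec v k := by
      have h2 := congrFun hy₂sol k
      rw [hwv, Matrix.mulVec_add] at h2
      have h3 : A.mulVec w k + A.mulVec v k = c k := h2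
      linarith
    have h2 : (A.mulVec v k).natAbs ≤ s * (M * B) := by
      have hterm : ∀ i, i ∉ S → (A k i * v i).natAbs = 0 := by
        intro i hi
        have hy10 : y₁ i = 0 := by
          rw [hSdef, Finset.mem_filter] at hi
          push_neg at hi
          have := hi (Finset.mem_univ i)
          omega
        have hy20 : y₂ i = 0 := by
          by_contra hcc
          exact (hy₂supp i hcc) hy10
        have : v i = 0 := by
          rw [hv]
          by_cases h : i ∈ L <;> simp [h, hy20]
        rw [this]
        simp
      calc (A.mulVec v k).natAbs = (∑ i, A k i * v i).natAbs := rfl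
      _ ≤ ∑ i, (A k i * v i).natAbs := natAbs_sum_le' _ _
      _ = ∑ i ∈ S, (A k i * v i).natAbs := by
          symm
          apply Finset.sum_subset (Finset.subset_univ S)
          intro i _ hi
          exact hterm i hi
      _ ≤ ∑ _i ∈ S, M * B := by
          apply Finset.sum_le_sum
          intro i _
          rw [Int.natAbs_mul]
          apply Nat.mul_le_mul (hA k i)
          simp only [hv]
          by_cases h : i ∈ L
          · simp [h]
          · have hle : y₂ i ≤ B := by
              have h' := h
              rw [hLdef, Finset.mem_filter] at h'
              push_neg at h'
              exact h' (Finset.mem_univ i)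
            rw [if_neg h]
            simpa using hle
      _ = s * (M * B) := by rw [Finset.sum_const, smul_eq_mul, ← hsdef]
    rw [h1]
    calc (c k - A.mulVec v k).natAbs ≤ (c k).natAbs + (A.mulVec v k).natAbs :=
      Int.natAbs_sub_le _ _
    _ ≤ M + s * (M * B) := Nat.add_le_add (hcb k) h2
    _ = C := by rw [hCdef]; ring
  have hwbd := bounded_of_indep A M hM hA hindep w hw0 C hCbound
  have hentry : ∀ i, y₂ i ≤ B * C := by
    intro i
    by_cases h : i ∈ L
    · have h1 := hwbd i
      rw [hw] at h1
      simp only [h, if_pos, if_true, Int.natAbs_natCast] at h1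
      calc y₂ i ≤ t.factorial * (t * (M * M)) ^ t * C := h1
      _ = B * C := by rw [hBdef]
    · have h1 : y₂ i ≤ B := by
        rw [hLdef, Finset.mem_filter] at h
        push_neg at h
        have := h (Finset.mem_univ i)
        omega
      have hC1 : 1 ≤ C := by
        rw [hCdef]
        omega
      calc y₂ i ≤ B := h1
      _ ≤ B * C := Nat.le_mul_of_pos_right _ (by omega)
  -- final assembly
  refine ⟨y₂, hy₂Sol, ?_, ?_⟩
  · -- support bound
    have hsub : Finset.univ.filter (fun i => y₂ i ≠ 0) ⊆ S := by
      intro i hi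
      rw [Finset.mem_filter] at hi
      rw [hSdef, Finset.mem_filter]
      have h2 := hy₂supp i hi.2
      exact ⟨Finset.mem_univ _, by omega⟩
    have h1 : (Finset.univ.filter (fun i => y₂ i ≠ 0)).card ≤ s :=
      Finset.card_le_card hsub
    have h2 : Nat.log 2 (3 * M) + Nat.log 2 t ≤ Nat.log 2 (1000000 * t * M) := by
      calc Nat.log 2 (3 * M) + Nat.log 2 t ≤ Nat.log 2 (3 * M * t) :=
        log_add_log_le (by omega) (by omega)
      _ ≤ Nat.log 2 (1000000 * t * M) := Nat.log_mono_right (by nlinarith)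
    have h3 : t * Nat.log 2 (3 * M) + t * Nat.log 2 t
        ≤ t * Nat.log 2 (1000000 * t * M) := by
      have h4 := Nat.mul_le_mul_left t h2
      have heq : t * (Nat.log 2 (3 * M) + Nat.log 2 t)
          = t * Nat.log 2 (3 * M) + t * Nat.log 2 t := by ring
      omega
    have h5 : 1000000 * t * (Nat.log 2 (1000000 * t * M) + 1)
        = 1000000 * (t * Nat.log 2 (1000000 * t * M)) + 1000000 * t := by ring
    omega
  · -- entry bound
    have htM : 1 ≤ t * M := by nlinarith
    obtain ⟨Q, hQdef⟩ : ∃ Q, Q = (t * M) ^ (2 * t) := ⟨_, rfl⟩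
    have hQ1 : 1 ≤ Q := by
      rw [hQdef]
      exact Nat.one_le_pow _ _ (by omega)
    have hBb : B ≤ Q := by
      calc B = t.factorial * (t * (M * M)) ^ t := hBdef
      _ ≤ t ^ t * (t * (M * M)) ^ t :=
          Nat.mul_le_mul_right _ (Nat.factorial_le_pow t)
      _ = (t * (t * (M * M))) ^ t := (mul_pow _ _ _).symm
      _ = ((t * M) * (t * M)) ^ t := by ring_nf
      _ = ((t * M) ^ 2) ^ t := by rw [← pow_two]
      _ = (t * M) ^ (2 * t) := by rw [← pow_mul]
      _ = Q := hQdef.symm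
    have hsB : s ≤ 220 * (t * t * M) := by
      have l1 : Nat.log 2 (3 * M) ≤ 3 * M := Nat.log_le_self _ _
      have l2 : Nat.log 2 t ≤ t := Nat.log_le_self _ _
      have m1 : t * Nat.log 2 (3 * M) ≤ 3 * (t * M) := by
        calc t * Nat.log 2 (3 * M) ≤ t * (3 * M) := Nat.mul_le_mul_left t l1
        _ = 3 * (t * M) := by ring
      have m2 : t * Nat.log 2 t ≤ t * t := Nat.mul_le_mul_left t l2
      have htt : t ≤ t * t := Nat.le_mul_of_pos_left t ht
      have m3 : t * M ≤ t * t * M := Nat.mul_le_mul_right M htt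
      have m4 : t * t ≤ t * t * M := Nat.le_mul_of_pos_right _ (by omega)
      have m5 : t ≤ t * t * M := le_trans htt m4
      omega
    have hC2 : C ≤ 221 * (t * t * (M * M)) * Q := by
      have e0 : M ≤ t * t * (M * M) * Q := by
        calc M ≤ M * M := Nat.le_mul_of_pos_left M (by omega)
        _ ≤ t * t * (M * M) := Nat.le_mul_of_pos_left _ (by positivity)
        _ ≤ t * t * (M * M) * Q := Nat.le_mul_of_pos_right _ (by omega)
      have e1 : s * (B * M) ≤ 220 * (t * t * M) * (Q * M) :=
        Nat.mul_le_mul hsB (Nat.mul_le_mul_right M hBb)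
      have e2 : 220 * (t * t * M) * (Q * M) = 220 * (t * t * (M * M)) * Q := by ring
      calc C = M + s * (B * M) := hCdef
      _ ≤ t * t * (M * M) * Q + 220 * (t * t * (M * M)) * Q :=
          Nat.add_le_add e0 (le_trans e1 (le_of_eq e2))
      _ = 221 * (t * t * (M * M)) * Q := by ring
    intro i
    have h0 := hentry i
    have h1 : B * C ≤ Q * (221 * (t * t * (M * M)) * Q) :=
      Nat.mul_le_mul hBb hC2
    have h2 : Q * (221 * (t * t * (M * M)) * Q) = 221 * ((t * M) ^ (4 * t + 2)) := by
      rw [hQdef]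
      ring
    have h4 : (t * M) ^ (4 * t + 2) ≤ (t * M) ^ (6 * t) :=
      Nat.pow_le_pow_right htM (by omega)
    have h5 : 221 * (t * M) ^ (6 * t) ≤ 1000000 * t * (t * M) ^ (1000000 * t) := by
      have h6 : 1000000 ≤ 1000000 * t := Nat.le_mul_of_pos_right _ ht
      exact Nat.mul_le_mul (by omega) (Nat.pow_le_pow_right htM (by omega))
    omega
end

section
/- Let m n : ℕ, let A be an m × n integer matrix and c : Fin m → ℤ. Then every minimal solution v ∈ MinSol(A,c) satisfies v i ≤ ((n+1) · ‖A‖ + ‖c‖ + 1)^m for every i : Fin n. -/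
/-- The set of minimal solutions (in the pointwise order) of `A x = c` over `ℕ`. -/
def MinSol {m n : ℕ} (A : Matrix (Fin m) (Fin n) ℤ) (c : Fin m → ℤ) : Set (Fin n → ℕ) :=
  {v | v ∈ Sol A c ∧ ∀ u ∈ Sol A c, (∀ i, u i ≤ v i) → u = v}

theorem minimal_solutions_are_bounded (m n : ℕ) (A : Matrix (Fin m) (Fin n) ℤ)
    (c : Fin m → ℤ) :
    ∀ v ∈ MinSol A c, ∀ i : Fin n,
      v i ≤ ((n + 1) * matNorm A + vecNorm c + 1) ^ m := by
  rintro v ⟨hv, hmin⟩ i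
  by_contra hbig
  push_neg at hbig
  set B : ℕ := (n + 1) * matNorm A + vecNorm c + 1 with hBdef
  have hVpos : 0 < v i := lt_of_le_of_lt (Nat.zero_le _) hbig
  have hVZ : (0 : ℤ) < ((v i : ℕ) : ℤ) := by exact_mod_cast hVpos
  have hv' : A.mulVec (fun j => ((v j : ℕ) : ℤ)) = c := hv
  have hrow : ∀ j, ∑ k, A j k * ((v k : ℕ) : ℤ) = c j := by
    intro j
    have := congrFun hv' j
    simpa [Matrix.mulVec, dotProduct] using this
  have habs : ∀ j k, |A j k| ≤ (matNorm A : ℤ) := by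
    intro j k
    have h1 : (A j k).natAbs ≤ matNorm A :=
      Finset.le_sup (f := fun p : Fin m × Fin n => (A p.1 p.2).natAbs)
        (Finset.mem_univ (j, k))
    calc |A j k| = ((A j k).natAbs : ℤ) := Int.abs_eq_natAbs _
      _ ≤ _ := by exact_mod_cast h1
  have hcabs : ∀ j, |c j| ≤ (vecNorm c : ℤ) := by
    intro j
    have h1 : (c j).natAbs ≤ vecNorm c :=
      Finset.le_sup (f := fun j => (c j).natAbs) (Finset.mem_univ j)
    calc |c j| = ((c j).natAbs : ℤ) := Int.abs_eq_natAbs _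
      _ ≤ _ := by exact_mod_cast h1
  -- value of V * (truncated vector entry)
  have hyk : ∀ t : ℕ, ∀ k : Fin n,
      ((v i : ℕ) : ℤ) * ((t * v k / v i : ℕ) : ℤ)
        = (t : ℤ) * ((v k : ℕ) : ℤ) - ((t * v k % v i : ℕ) : ℤ) := by
    intro t k
    have h := Nat.div_add_mod (t * v k) (v i)
    have h2 : ((v i * (t * v k / v i) + t * v k % v i : ℕ) : ℤ)
        = ((t * v k : ℕ) : ℤ) := by rw [h]
    rw [Nat.cast_add, Nat.cast_mul, Nat.cast_mul] at h2
    linarith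
  -- the key bounds on the rows of A applied to truncations
  have hbound : ∀ t : ℕ, t ≤ v i → ∀ j : Fin m,
      (∑ k, A j k * ((t * v k / v i : ℕ) : ℤ)) ∈
        Finset.Icc (min (c j) 0 - ∑ k, max (A j k) 0)
          (max (c j) 0 + ∑ k, max (-A j k) 0) := by
    intro t ht j
    have htZ : (t : ℤ) ≤ ((v i : ℕ) : ℤ) := by exact_mod_cast ht
    have ht0 : (0 : ℤ) ≤ (t : ℤ) := by positivity
    have hident : ((v i : ℕ) : ℤ) * (∑ k, A j k * ((t * v k / v i : ℕ) : ℤ))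
        = (t : ℤ) * c j - ∑ k, A j k * ((t * v k % v i : ℕ) : ℤ) := by
      rw [Finset.mul_sum]
      have hterm : ∀ k ∈ Finset.univ, ((v i : ℕ) : ℤ) * (A j k * ((t * v k / v i : ℕ) : ℤ))
          = (t : ℤ) * (A j k * ((v k : ℕ) : ℤ)) - A j k * ((t * v k % v i : ℕ) : ℤ) := by
        intro k _
        have h := hyk t k
        calc ((v i : ℕ) : ℤ) * (A j k * ((t * v k / v i : ℕ) : ℤ))
            = A j k * (((v i : ℕ) : ℤ) * ((t * v k / v i : ℕ) : ℤ)) := by ring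
          _ = A j k * ((t : ℤ) * ((v k : ℕ) : ℤ) - ((t * v k % v i : ℕ) : ℤ)) := by rw [h]
          _ = (t : ℤ) * (A j k * ((v k : ℕ) : ℤ)) - A j k * ((t * v k % v i : ℕ) : ℤ) := by
              ring
      rw [Finset.sum_congr rfl hterm, Finset.sum_sub_distrib, ← Finset.mul_sum, hrow j]
    have hr0 : ∀ k : Fin n, (0 : ℤ) ≤ ((t * v k % v i : ℕ) : ℤ) := by
      intro k; positivity
    have hrV : ∀ k : Fin n, ((t * v k % v i : ℕ) : ℤ) ≤ ((v i : ℕ) : ℤ) := by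
      intro k; exact_mod_cast (Nat.mod_lt _ hVpos).le
    have h1 : (t : ℤ) * c j ≤ ((v i : ℕ) : ℤ) * max (c j) 0 := by
      rcases le_total (c j) 0 with h | h
      · rw [max_eq_right h]
        have : (t : ℤ) * c j ≤ 0 := mul_nonpos_of_nonneg_of_nonpos ht0 h
        linarith
      · rw [max_eq_left h]
        exact mul_le_mul_of_nonneg_right htZ h
    have h2 : ((v i : ℕ) : ℤ) * min (c j) 0 ≤ (t : ℤ) * c j := by
      rcases le_total (c j) 0 with h | h
      · rw [min_eq_left h]
        exact mul_le_mul_of_nonpos_right htZ h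
      · rw [min_eq_right h]
        have : (0 : ℤ) ≤ (t : ℤ) * c j := mul_nonneg ht0 h
        linarith
    have h3 : ∑ k, A j k * ((t * v k % v i : ℕ) : ℤ)
        ≤ ((v i : ℕ) : ℤ) * ∑ k, max (A j k) 0 := by
      rw [Finset.mul_sum]
      refine Finset.sum_le_sum fun k _ => ?_
      calc A j k * ((t * v k % v i : ℕ) : ℤ)
          ≤ max (A j k) 0 * ((t * v k % v i : ℕ) : ℤ) :=
            mul_le_mul_of_nonneg_right (le_max_left _ _) (hr0 k)
        _ ≤ max (A j k) 0 * ((v i : ℕ) : ℤ) :=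
            mul_le_mul_of_nonneg_left (hrV k) (le_max_right _ _)
        _ = ((v i : ℕ) : ℤ) * max (A j k) 0 := mul_comm _ _
    have h4 : -(((v i : ℕ) : ℤ) * ∑ k, max (-A j k) 0)
        ≤ ∑ k, A j k * ((t * v k % v i : ℕ) : ℤ) := by
      rw [Finset.mul_sum, ← Finset.sum_neg_distrib]
      refine Finset.sum_le_sum fun k _ => ?_
      have hAk : -(max (-A j k) 0) ≤ A j k := by
        have := le_max_left (-A j k) 0
        linarith
      calc -(((v i : ℕ) : ℤ) * max (-A j k) 0)
          = (-(max (-A j k) 0)) * ((v i : ℕ) : ℤ) := by ring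
        _ ≤ (-(max (-A j k) 0)) * ((t * v k % v i : ℕ) : ℤ) := by
            apply mul_le_mul_of_nonpos_left (hrV k)
            have := le_max_right (-A j k) 0
            linarith
        _ ≤ A j k * ((t * v k % v i : ℕ) : ℤ) :=
            mul_le_mul_of_nonneg_right hAk (hr0 k)
    rw [Finset.mem_Icc]
    constructor
    · have hkey : ((v i : ℕ) : ℤ) * (min (c j) 0 - ∑ k, max (A j k) 0)
          ≤ ((v i : ℕ) : ℤ) * (∑ k, A j k * ((t * v k / v i : ℕ) : ℤ)) := by
        rw [hident, mul_sub]
        linarith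
      exact le_of_mul_le_mul_left hkey hVZ
    · have hkey : ((v i : ℕ) : ℤ) * (∑ k, A j k * ((t * v k / v i : ℕ) : ℤ))
          ≤ ((v i : ℕ) : ℤ) * (max (c j) 0 + ∑ k, max (-A j k) 0) := by
        rw [hident, mul_add]
        linarith
      exact le_of_mul_le_mul_left hkey hVZ
  -- cardinality of each interval
  have hcard : ∀ j : Fin m,
      (Finset.Icc (min (c j) 0 - ∑ k, max (A j k) 0)
        (max (c j) 0 + ∑ k, max (-A j k) 0)).card ≤ B := by
    intro j
    rw [Int.card_Icc]
    rw [Int.toNat_le]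
    have habs2 : ∀ k : Fin n, max (A j k) 0 + max (-A j k) 0 = |A j k| := by
      intro k
      rcases le_total 0 (A j k) with h | h
      · rw [max_eq_left h, max_eq_right (neg_nonpos.mpr h), abs_of_nonneg h]; ring
      · rw [max_eq_right h, max_eq_left (neg_nonneg.mpr h), abs_of_nonpos h]; ring
    have hmaxmin : max (c j) 0 - min (c j) 0 = |c j| := by
      rcases le_total 0 (c j) with h | h
      · rw [max_eq_left h, min_eq_right h, abs_of_nonneg h]; ring
      · rw [max_eq_right h, min_eq_left h, abs_of_nonpos h]; ring
    have hsum : ∑ k, |A j k| ≤ (n : ℤ) * (matNorm A : ℤ) := by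
      calc ∑ k, |A j k| ≤ ∑ _k : Fin n, (matNorm A : ℤ) :=
            Finset.sum_le_sum fun k _ => habs j k
        _ = (n : ℤ) * (matNorm A : ℤ) := by
            simp [Finset.sum_const, mul_comm]
    have heqsum : ∑ k, (max (A j k) 0 + max (-A j k) 0) = ∑ k, |A j k| :=
      Finset.sum_congr rfl fun k _ => habs2 k
    have hexp : max (c j) 0 + (∑ k, max (-A j k) 0) + 1
        - (min (c j) 0 - ∑ k, max (A j k) 0)
        = |c j| + (∑ k, |A j k|) + 1 := by
      rw [← hmaxmin, ← heqsum, Finset.sum_add_distrib]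
      ring
    have hBZ : ((B : ℕ) : ℤ) = ((n : ℤ) + 1) * (matNorm A : ℤ) + (vecNorm c : ℤ) + 1 := by
      rw [hBdef]; push_cast; ring
    rw [hexp, hBZ]
    have := hcabs j
    have hA0 : (0 : ℤ) ≤ (matNorm A : ℤ) := by positivity
    linarith [hsum]
  -- pigeonhole
  have hmaps : ∀ t ∈ Finset.range (v i + 1),
      (fun j => ∑ k, A j k * ((t * v k / v i : ℕ) : ℤ)) ∈
        Fintype.piFinset (fun j => Finset.Icc (min (c j) 0 - ∑ k, max (A j k) 0)
          (max (c j) 0 + ∑ k, max (-A j k) 0)) := by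
    intro t ht
    rw [Fintype.mem_piFinset]
    intro j
    exact hbound t (Nat.lt_succ_iff.mp (Finset.mem_range.mp ht)) j
  have hcardlt : (Fintype.piFinset (fun j => Finset.Icc (min (c j) 0 - ∑ k, max (A j k) 0)
      (max (c j) 0 + ∑ k, max (-A j k) 0))).card < (Finset.range (v i + 1)).card := by
    rw [Finset.card_range, Fintype.card_piFinset]
    calc (∏ j, (Finset.Icc (min (c j) 0 - ∑ k, max (A j k) 0)
            (max (c j) 0 + ∑ k, max (-A j k) 0)).card)
        ≤ B ^ m := by
          have := Finset.prod_le_pow_card Finset.univ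
            (fun j : Fin m => (Finset.Icc (min (c j) 0 - ∑ k, max (A j k) 0)
              (max (c j) 0 + ∑ k, max (-A j k) 0)).card) B (fun j _ => hcard j)
          simpa using this
      _ < v i := hbig
      _ < v i + 1 := Nat.lt_succ_self _
  obtain ⟨t1, ht1, t2, ht2, hne, heq⟩ :=
    Finset.exists_ne_map_eq_of_card_lt_of_maps_to hcardlt hmaps
  rw [Finset.mem_range, Nat.lt_succ_iff] at ht1 ht2
  -- the main contradiction
  have main : ∀ s t : ℕ, s ≤ v i → t ≤ v i → s < t →
      (fun j => ∑ k, A j k * ((s * v k / v i : ℕ) : ℤ))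
        = (fun j => ∑ k, A j k * ((t * v k / v i : ℕ) : ℤ)) → False := by
    intro s t hs ht hst hfeq
    have hq1 : ∀ k, s * v k / v i ≤ t * v k / v i := fun k =>
      Nat.div_le_div_right (Nat.mul_le_mul_right _ hst.le)
    have hq2 : ∀ k, t * v k / v i ≤ v k := by
      intro k
      calc t * v k / v i ≤ v i * v k / v i :=
            Nat.div_le_div_right (Nat.mul_le_mul_right _ ht)
        _ = v k := Nat.mul_div_cancel_left _ hVpos
    set u : Fin n → ℕ := fun k => v k - (t * v k / v i - s * v k / v i) with hudef
    have hule : ∀ k, u k ≤ v k := fun k => Nat.sub_le _ _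
    have hcast : ∀ k, ((u k : ℕ) : ℤ)
        = ((v k : ℕ) : ℤ) - ((t * v k / v i : ℕ) : ℤ) + ((s * v k / v i : ℕ) : ℤ) := by
      intro k
      have hle : t * v k / v i - s * v k / v i ≤ v k :=
        le_trans (Nat.sub_le _ _) (hq2 k)
      show (((v k - (t * v k / v i - s * v k / v i)) : ℕ) : ℤ) = _
      rw [Nat.cast_sub hle, Nat.cast_sub (hq1 k)]
      ring
    have husol : u ∈ Sol A c := by
      show A.mulVec (fun k => ((u k : ℕ) : ℤ)) = c
      funext j
      have hj := congrFun hfeq j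
      simp only [Matrix.mulVec, dotProduct]
      calc ∑ k, A j k * ((u k : ℕ) : ℤ)
          = ∑ k, (A j k * ((v k : ℕ) : ℤ) - A j k * ((t * v k / v i : ℕ) : ℤ)
              + A j k * ((s * v k / v i : ℕ) : ℤ)) :=
            Finset.sum_congr rfl fun k _ => by rw [hcast k]; ring
        _ = (∑ k, A j k * ((v k : ℕ) : ℤ)) - (∑ k, A j k * ((t * v k / v i : ℕ) : ℤ))
              + (∑ k, A j k * ((s * v k / v i : ℕ) : ℤ)) := by
            rw [Finset.sum_add_distrib, Finset.sum_sub_distrib]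
        _ = c j := by rw [hrow j, ← hj]; ring
    have huv := hmin u husol hule
    have hui : u i = v i - (t - s) := by
      show v i - (t * v i / v i - s * v i / v i) = v i - (t - s)
      rw [Nat.mul_div_cancel _ hVpos, Nat.mul_div_cancel _ hVpos]
    have hlt : u i < v i := by
      rw [hui]
      exact Nat.sub_lt hVpos (by omega)
    rw [huv] at hlt
    exact lt_irrefl _ hlt
  rcases hne.lt_or_gt with h | h
  · exact main t1 t2 ht1 ht2 h heq
  · exact main t2 t1 ht2 ht1 h heq.symm
end

section
/- Let m n : ℕ, let A be an m × n integer matrix and c : Fin m → ℤ. Set L := ((n+1) · ‖A‖ + ‖c‖ + 1)^m, D := n · ‖A‖ · L, and k := n · L · (2·D+1)^m + 1. Then there exists a nondeterministic finite automaton M over the alphabet Fin n with state set Fin k such that: every word accepted by M has length at most k, MinSol(A,c) ⊆ Parikh(M), and Parikh(M) ⊆ Sol(A,c). -/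
/-- The bound `L = ((n+1) ⬝ ‖A‖ + ‖c‖ + 1)^m` on the entries of minimal solutions. -/
def Lval (m n : ℕ) (A : Matrix (Fin m) (Fin n) ℤ) (c : Fin m → ℤ) : ℕ :=
  ((n + 1) * matNorm A + vecNorm c + 1) ^ m

/-- The quantity `D = n ⬝ ‖A‖ ⬝ L`. -/
def Dval (m n : ℕ) (A : Matrix (Fin m) (Fin n) ℤ) (c : Fin m → ℤ) : ℕ :=
  n * matNorm A * Lval m n A c

/-- The number of states `k = n ⬝ L ⬝ (2·D+1)^m + 1`. -/
def kval (m n : ℕ) (A : Matrix (Fin m) (Fin n) ℤ) (c : Fin m → ℤ) : ℕ :=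
  n * Lval m n A c * (2 * Dval m n A c + 1) ^ m + 1

/-- The Parikh image of an NFA over the alphabet `Fin n`. -/
def ParikhImage {n k : ℕ} (M : NFA (Fin n) (Fin k)) : Set (Fin n → ℕ) :=
  {v | ∃ w ∈ M.accepts, v = fun i => w.count i}

open Finset

section Part1

variable {m n : ℕ} {A : Matrix (Fin m) (Fin n) ℤ} {c : Fin m → ℤ}

lemma entry_le_matNorm (j : Fin m) (i : Fin n) : (A j i).natAbs ≤ matNorm A :=
  Finset.le_sup (f := fun p : Fin m × Fin n => (A p.1 p.2).natAbs) (mem_univ (j, i))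

lemma entry_le_vecNorm (j : Fin m) : (c j).natAbs ≤ vecNorm c :=
  Finset.le_sup (f := fun i => (c i).natAbs) (mem_univ j)

theorem minsol_sum_lt {v : Fin n → ℕ} (hv : v ∈ MinSol A c) :
    ∑ i, v i < Lval m n A c := by
  classical
  set N := ∑ i, v i with hN
  set B := n * matNorm A + vecNorm c + 1 with hB
  suffices h : N + 1 ≤ B ^ m by
    have hBL : B ^ m ≤ Lval m n A c := by
      apply Nat.pow_le_pow_left
      have : n * matNorm A ≤ (n + 1) * matNorm A := by
        apply Nat.mul_le_mul_right; omega
      omega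
    omega
  have hSol : ∀ j, ∑ i, A j i * (v i : ℤ) = c j := by
    intro j
    have := congrFun hv.1 j
    simpa [Matrix.mulVec, dotProduct] using this
  -- keys
  set κ : (Σ i : Fin n, Fin (v i)) → ℚ ×ₗ (Fin n) :=
    (fun x => toLex (((x.2 : ℕ) + 1 : ℚ) / (v x.1 : ℚ), x.1)) with hκdef
  have hvpos : ∀ x : (Σ i : Fin n, Fin (v i)), 0 < v x.1 := fun x =>
    Nat.pos_of_ne_zero (by intro h0; exact absurd x.2.2 (by simp [h0]))
  have hκ : Function.Injective κ := by
    rintro ⟨i, j⟩ ⟨i', j'⟩ hxy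
    have h2 : i = i' := congrArg (fun p => (ofLex p).2) hxy
    cases h2
    have h1 : (((j : ℕ) + 1 : ℚ) / (v i : ℚ)) = (((j' : ℕ) + 1 : ℚ) / (v i : ℚ)) :=
      congrArg (fun p => (ofLex p).1) hxy
    have hv' : ((v i : ℚ)) ≠ 0 := by
      have := hvpos ⟨i, j⟩; positivity
    have hjj : ((j : ℕ) : ℚ) = ((j' : ℕ) : ℚ) := by
      field_simp at h1
      linarith
    have : (j : ℕ) = (j' : ℕ) := by exact_mod_cast hjj
    simp [Fin.ext_iff, this]
  -- the chain, indexed by Option of the key type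
  set Q : Option (Σ i : Fin n, Fin (v i)) → Fin n → ℕ :=
    (fun o i => o.elim 0 (fun z => (univ.filter fun j : Fin (v i) => κ ⟨i, j⟩ ≤ κ z).card))
    with hQdef
  have hQ_le : ∀ o i, Q o i ≤ v i := by
    rintro (_ | z) i
    · simp [hQdef]
    · simpa [hQdef] using Finset.card_filter_le univ (fun j : Fin (v i) => κ ⟨i, j⟩ ≤ κ z)
  -- strict comparison structure
  have hQ_lt : ∀ o o' : Option (Σ i : Fin n, Fin (v i)), o ≠ o' →
      (∀ i, Q o i ≤ Q o' i) ∧ (∃ i, Q o i < Q o' i) ∨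
      (∀ i, Q o' i ≤ Q o i) ∧ (∃ i, Q o' i < Q o i) := by
    have key : ∀ z' : (Σ i : Fin n, Fin (v i)), ∀ o,
        (o = none ∨ ∃ z, o = some z ∧ κ z < κ z') →
        (∀ i, Q o i ≤ Q (some z') i) ∧ (∃ i, Q o i < Q (some z') i) := by
      rintro ⟨i', j'⟩ o ho
      have hmem : (⟨i', j'⟩ : Σ i : Fin n, Fin (v i)).2 ∈
          (univ.filter fun j : Fin (v i') => κ ⟨i', j⟩ ≤ κ ⟨i', j'⟩) := by
        simp
      rcases ho with rfl | ⟨z, rfl, hzz⟩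
      · constructor
        · intro i; simp [hQdef]
        · refine ⟨i', ?_⟩
          have : 0 < (univ.filter fun j : Fin (v i') => κ ⟨i', j⟩ ≤ κ ⟨i', j'⟩).card :=
            Finset.card_pos.2 ⟨j', hmem⟩
          simpa [hQdef] using this
      · have hsub : ∀ i, (univ.filter fun j : Fin (v i) => κ ⟨i, j⟩ ≤ κ z)
            ⊆ (univ.filter fun j : Fin (v i) => κ ⟨i, j⟩ ≤ κ ⟨i', j'⟩) := by
          intro i j hj
          simp only [Finset.mem_filter, Finset.mem_univ, true_and] at hj ⊢
          exact hj.trans hzz.le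
        constructor
        · intro i
          simpa [hQdef] using Finset.card_le_card (hsub i)
        · refine ⟨i', ?_⟩
          have hnot : (⟨i', j'⟩ : Σ i : Fin n, Fin (v i)).2 ∉
              (univ.filter fun j : Fin (v i') => κ ⟨i', j⟩ ≤ κ z) := by
            simp only [Finset.mem_filter, Finset.mem_univ, true_and]
            intro hle
            exact absurd hzz (not_lt.2 hle)
          have := Finset.card_lt_card
            ((Finset.ssubset_iff_of_subset (hsub i')).2 ⟨j', hmem, hnot⟩)
          simpa [hQdef] using this
    rintro (_ | z) (_ | z') hne
    · exact absurd rfl hne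
    · exact Or.inl (key z' none (Or.inl rfl))
    · exact Or.inr (key z none (Or.inl rfl))
    · rcases lt_trichotomy (κ z) (κ z') with h | h | h
      · exact Or.inl (key z' (some z) (Or.inr ⟨z, rfl, h⟩))
      · exact absurd (by rw [hκ h]) hne
      · exact Or.inr (key z (some z') (Or.inr ⟨z', rfl, h⟩))
  have hquota : ∀ o, ∃ θ : ℚ, 0 ≤ θ ∧ θ ≤ 1 ∧
      ∀ i, (Q o i : ℚ) ≤ θ * v i ∧ θ * v i - 1 ≤ (Q o i : ℚ) := by
    classical
    rintro (_ | ⟨i₀, j₀⟩)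
    · exact ⟨0, le_refl _, by norm_num, fun i => by simp [hQdef]⟩
    · have hvi₀ : 0 < v i₀ := j₀.pos
      refine ⟨((j₀ : ℕ) + 1 : ℚ) / (v i₀ : ℚ), by positivity, ?_, ?_⟩
      · rw [div_le_one (by exact_mod_cast hvi₀)]
        exact_mod_cast j₀.2
      intro i
      set θ : ℚ := ((j₀ : ℕ) + 1 : ℚ) / (v i₀ : ℚ) with hθ
      have hθ0 : 0 ≤ θ := by positivity
      have hθ1 : θ ≤ 1 := by
        rw [hθ, div_le_one (by exact_mod_cast hvi₀)]
        exact_mod_cast j₀.2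
      rcases Nat.eq_zero_or_pos (v i) with hvi | hvi
      · have : IsEmpty (Fin (v i)) := by rw [hvi]; infer_instance
        constructor
        · simp [hQdef, hvi, Finset.filter_eq_empty_iff]
        · simp [hQdef, hvi]
      -- characterization of membership
      have hmem : ∀ j : Fin (v i), (κ ⟨i, j⟩ ≤ κ ⟨i₀, j₀⟩) ↔
          (((j : ℕ) + 1 : ℚ) / (v i : ℚ) < θ ∨
            (((j : ℕ) + 1 : ℚ) / (v i : ℚ) = θ ∧ i ≤ i₀)) := by
        intro j
        rw [hκdef]
        exact Prod.Lex.le_iff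
      have hQval : Q (some ⟨i₀, j₀⟩) i
          = (univ.filter fun j : Fin (v i) => κ ⟨i, j⟩ ≤ κ ⟨i₀, j₀⟩).card := by
        simp [hQdef]
      constructor
      · -- upper bound
        set b := ⌊θ * (v i : ℚ)⌋₊ with hb
        have hsub : (univ.filter fun j : Fin (v i) => κ ⟨i, j⟩ ≤ κ ⟨i₀, j₀⟩) ⊆
            (univ.filter fun j : Fin (v i) => (j : ℕ) < b) := by
          intro j hj
          simp only [Finset.mem_filter, Finset.mem_univ, true_and] at hj ⊢
          rw [hmem j] at hj
          have hdiv : ((j : ℕ) + 1 : ℚ) / (v i : ℚ) ≤ θ := by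
            rcases hj with h | ⟨h, _⟩
            · exact h.le
            · exact h.le
          have h1 : ((j : ℕ) + 1 : ℚ) ≤ θ * (v i : ℚ) := by
            rw [div_le_iff₀ (by exact_mod_cast hvi)] at hdiv
            linarith
          have h2 : ((j : ℕ) + 1) ≤ b := Nat.le_floor (by exact_mod_cast h1)
          omega
        have hcard : (univ.filter fun j : Fin (v i) => (j : ℕ) < b).card ≤ b := by
          have hc2 : (univ.filter fun j : Fin (v i) => (j : ℕ) < b).card ≤ (Finset.range b).card := by
            apply Finset.card_le_card_of_injOn (fun j : Fin (v i) => (j : ℕ))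
            · intro j hj
              simp only [Finset.coe_filter, Finset.mem_coe, Set.mem_setOf_eq, Finset.mem_filter, Finset.mem_univ, true_and] at hj
              exact Finset.mem_range.2 hj
            · intro a _ a' _ h
              exact Fin.ext h
          simpa using hc2
        have := (Finset.card_le_card hsub).trans hcard
        rw [hQval]
        calc ((univ.filter fun j : Fin (v i) => κ ⟨i, j⟩ ≤ κ ⟨i₀, j₀⟩).card : ℚ)
            ≤ (b : ℚ) := by exact_mod_cast this
          _ ≤ θ * (v i : ℚ) := Nat.floor_le (by positivity)
      · -- lower bound
        set b' := ⌈θ * (v i : ℚ)⌉₊ - 1 with hb'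
        have hceil : θ * (v i : ℚ) ≤ (v i : ℕ) := by
          calc θ * (v i : ℚ) ≤ 1 * (v i : ℚ) := by
                apply mul_le_mul_of_nonneg_right hθ1 (by positivity)
            _ = (v i : ℚ) := one_mul _
        have hb'v : b' ≤ v i := by
          have : ⌈θ * (v i : ℚ)⌉₊ ≤ v i := Nat.ceil_le.2 hceil
          omega
        have hsub : (Finset.range b').attachFin
              (fun x hx => lt_of_lt_of_le (Finset.mem_range.1 hx) hb'v) ⊆
            (univ.filter fun j : Fin (v i) => κ ⟨i, j⟩ ≤ κ ⟨i₀, j₀⟩) := by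
          intro j hj
          rw [Finset.mem_attachFin, Finset.mem_range] at hj
          simp only [Finset.mem_filter, Finset.mem_univ, true_and]
          rw [hmem j]
          left
          rw [div_lt_iff₀ (by exact_mod_cast hvi)]
          have hc1 : 1 ≤ ⌈θ * (v i : ℚ)⌉₊ := by omega
          have hlt : (⌈θ * (v i : ℚ)⌉₊ : ℚ) < θ * (v i : ℚ) + 1 :=
            Nat.ceil_lt_add_one (by positivity)
          have : ((j : ℕ) + 1 : ℚ) ≤ (b' : ℚ) := by exact_mod_cast hj
          have hb'q : (b' : ℚ) = (⌈θ * (v i : ℚ)⌉₊ : ℚ) - 1 := by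
            rw [hb']
            push_cast [Nat.cast_sub hc1]
            ring
          calc ((j : ℕ) + 1 : ℚ) ≤ (b' : ℚ) := this
            _ = (⌈θ * (v i : ℚ)⌉₊ : ℚ) - 1 := hb'q
            _ < θ * (v i : ℚ) := by linarith
        have hcard := Finset.card_le_card hsub
        rw [Finset.card_attachFin, Finset.card_range] at hcard
        rw [hQval]
        have hle : (b' : ℚ) ≤ ((univ.filter fun j : Fin (v i) =>
            κ ⟨i, j⟩ ≤ κ ⟨i₀, j₀⟩).card : ℚ) := by exact_mod_cast hcard
        have : θ * (v i : ℚ) - 1 ≤ (b' : ℚ) := by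
          have hceil' : θ * (v i : ℚ) ≤ (⌈θ * (v i : ℚ)⌉₊ : ℚ) := Nat.le_ceil _
          rcases Nat.eq_zero_or_pos ⌈θ * (v i : ℚ)⌉₊ with h0 | h1
          · rw [h0] at hceil'
            push_cast at hceil' ⊢
            have : (b' : ℚ) ≥ 0 := by positivity
            linarith
          · have : (b' : ℚ) = (⌈θ * (v i : ℚ)⌉₊ : ℚ) - 1 := by
              rw [hb']
              push_cast [Nat.cast_sub h1]
              ring
            have h2 : (⌈θ * (v i : ℚ)⌉₊ : ℚ) < θ * (v i : ℚ) + 1 :=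
              Nat.ceil_lt_add_one (by positivity)
            linarith [Nat.le_ceil (θ * (v i : ℚ))]
        linarith
  set p : Option (Σ i : Fin n, Fin (v i)) → Fin m → ℤ :=
    (fun o j => ∑ i, A j i * (Q o i : ℤ)) with hpdef
  have hp_inj : Function.Injective p := by
    have main : ∀ o o', p o = p o' → (∀ i, Q o i ≤ Q o' i) →
        (∃ i, Q o i < Q o' i) → False := by
      intro o o' hpo hmono hstrict
      set d : Fin n → ℕ := fun i => Q o' i - Q o i with hd
      have hdv : ∀ i, d i ≤ v i := fun i => le_trans (Nat.sub_le _ _) (hQ_le o' i)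
      set u : Fin n → ℕ := fun i => v i - d i with hu
      have hucast : ∀ i, (u i : ℤ) = (v i : ℤ) - (d i : ℤ) := by
        intro i
        have h1 := hdv i
        rw [hu]
        push_cast [Nat.cast_sub h1]
        ring
      have hdcast : ∀ i, (d i : ℤ) = (Q o' i : ℤ) - (Q o i : ℤ) := by
        intro i
        have h1 := hmono i
        rw [hd]
        push_cast [Nat.cast_sub h1]
        ring
      have hdsum : ∀ j, ∑ i, A j i * (d i : ℤ) = 0 := by
        intro j
        have h1 : p o j = p o' j := congrFun hpo j
        rw [hpdef] at h1
        simp only at h1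
        calc ∑ i, A j i * (d i : ℤ)
            = ∑ i, (A j i * (Q o' i : ℤ) - A j i * (Q o i : ℤ)) := by
              apply Finset.sum_congr rfl
              intro i _
              rw [hdcast i]; ring
          _ = (∑ i, A j i * (Q o' i : ℤ)) - ∑ i, A j i * (Q o i : ℤ) :=
              Finset.sum_sub_distrib _ _
          _ = 0 := by rw [← h1]; ring
      have husol : u ∈ Sol A c := by
        show A.mulVec (fun i => (u i : ℤ)) = c
        funext j
        have : A.mulVec (fun i => (u i : ℤ)) j = ∑ i, A j i * (u i : ℤ) := by
          simp [Matrix.mulVec, dotProduct]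
        rw [this]
        calc ∑ i, A j i * (u i : ℤ)
            = ∑ i, (A j i * (v i : ℤ) - A j i * (d i : ℤ)) := by
              apply Finset.sum_congr rfl
              intro i _
              rw [hucast i]; ring
          _ = (∑ i, A j i * (v i : ℤ)) - ∑ i, A j i * (d i : ℤ) :=
              Finset.sum_sub_distrib _ _
          _ = c j := by rw [hSol j, hdsum j]; ring
      have huv : u = v := hv.2 u husol (fun i => Nat.sub_le _ _)
      obtain ⟨i, hi⟩ := hstrict
      have h1 : u i = v i := congrFun huv i
      have h2 := hdv i
      have h3 : 0 < d i := by simp only [hd]; omega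
      rw [hu] at h1
      simp only at h1
      omega
    intro o o' hpo
    by_contra hne
    rcases hQ_lt o o' hne with ⟨hm, hs⟩ | ⟨hm, hs⟩
    · exact main o o' hpo hm hs
    · exact main o' o hpo.symm hm hs
  -- box bounds
  have hbox : ∀ o j, (min 0 (c j) - ∑ i, max (A j i) 0 : ℤ) ≤ p o j ∧
      p o j ≤ max 0 (c j) + ∑ i, max (-A j i) 0 := by
    intro o j
    obtain ⟨θ, hθ0, hθ1, hq⟩ := hquota o
    have hkey : ((p o j : ℤ) : ℚ)
        = θ * (c j : ℚ) + ∑ i, (A j i : ℚ) * ((Q o i : ℚ) - θ * (v i : ℚ)) := by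
      have h1 : ∑ i, (A j i : ℚ) * ((Q o i : ℚ) - θ * (v i : ℚ))
          = (∑ i, (A j i : ℚ) * (Q o i : ℚ)) - θ * ∑ i, (A j i : ℚ) * (v i : ℚ) := by
        rw [Finset.mul_sum, ← Finset.sum_sub_distrib]
        apply Finset.sum_congr rfl
        intro i _
        ring
      have h2 : ∑ i, (A j i : ℚ) * (v i : ℚ) = (c j : ℚ) := by
        exact_mod_cast congrArg (fun x : ℤ => (x : ℚ)) (hSol j)
      have h3 : ((p o j : ℤ) : ℚ) = ∑ i, (A j i : ℚ) * (Q o i : ℚ) := by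
        rw [hpdef]
        push_cast
        rfl
      rw [h1, h2, h3]
      ring
    have hup : ∀ i, (A j i : ℚ) * ((Q o i : ℚ) - θ * (v i : ℚ)) ≤ ((max (-A j i) 0 : ℤ) : ℚ) := by
      intro i
      have h1 := (hq i).1
      have h2 := (hq i).2
      rcases le_or_gt 0 (A j i) with hA | hA
      · have : ((max (-A j i) 0 : ℤ) : ℚ) = 0 := by
          have : max (-A j i) 0 = 0 := max_eq_right (by omega)
          rw [this]; norm_num
        rw [this]
        have hAq : (0 : ℚ) ≤ (A j i : ℚ) := by exact_mod_cast hA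
        nlinarith
      · have : ((max (-A j i) 0 : ℤ) : ℚ) = -(A j i : ℚ) := by
          have : max (-A j i) 0 = -A j i := max_eq_left (by omega)
          rw [this]; push_cast; ring
        rw [this]
        have hAq : (A j i : ℚ) < 0 := by exact_mod_cast hA
        nlinarith
    have hlo : ∀ i, (-((max (A j i) 0 : ℤ) : ℚ)) ≤ (A j i : ℚ) * ((Q o i : ℚ) - θ * (v i : ℚ)) := by
      intro i
      have h1 := (hq i).1
      have h2 := (hq i).2
      rcases le_or_gt 0 (A j i) with hA | hA
      · have : ((max (A j i) 0 : ℤ) : ℚ) = (A j i : ℚ) := by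
          have : max (A j i) 0 = A j i := max_eq_left hA
          rw [this]
        rw [this]
        have hAq : (0 : ℚ) ≤ (A j i : ℚ) := by exact_mod_cast hA
        nlinarith
      · have : ((max (A j i) 0 : ℤ) : ℚ) = 0 := by
          have : max (A j i) 0 = 0 := max_eq_right (by omega)
          rw [this]; norm_num
        rw [this]
        have hAq : (A j i : ℚ) < 0 := by exact_mod_cast hA
        nlinarith
    have hsumup : ∑ i, (A j i : ℚ) * ((Q o i : ℚ) - θ * (v i : ℚ))
        ≤ ((∑ i, max (-A j i) 0 : ℤ) : ℚ) := by
      push_cast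
      exact Finset.sum_le_sum (fun i _ => by
        have := hup i
        push_cast at this
        exact this)
    have hsumlo : (-((∑ i, max (A j i) 0 : ℤ) : ℚ))
        ≤ ∑ i, (A j i : ℚ) * ((Q o i : ℚ) - θ * (v i : ℚ)) := by
      push_cast
      rw [← Finset.sum_neg_distrib]
      exact Finset.sum_le_sum (fun i _ => by
        have := hlo i
        push_cast at this
        exact this)
    have hθc_up : θ * (c j : ℚ) ≤ ((max 0 (c j) : ℤ) : ℚ) := by
      rcases le_or_gt 0 (c j) with hc | hc
      · have : ((max 0 (c j) : ℤ) : ℚ) = (c j : ℚ) := by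
          rw [max_eq_right hc]
        rw [this]
        have hcq : (0 : ℚ) ≤ (c j : ℚ) := by exact_mod_cast hc
        nlinarith
      · have : ((max 0 (c j) : ℤ) : ℚ) = 0 := by
          rw [max_eq_left (by omega)]; norm_num
        rw [this]
        have hcq : (c j : ℚ) < 0 := by exact_mod_cast hc
        nlinarith
    have hθc_lo : ((min 0 (c j) : ℤ) : ℚ) ≤ θ * (c j : ℚ) := by
      rcases le_or_gt 0 (c j) with hc | hc
      · have : ((min 0 (c j) : ℤ) : ℚ) = 0 := by
          rw [min_eq_left hc]; norm_num
        rw [this]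
        have hcq : (0 : ℚ) ≤ (c j : ℚ) := by exact_mod_cast hc
        nlinarith
      · have : ((min 0 (c j) : ℤ) : ℚ) = (c j : ℚ) := by
          rw [min_eq_right (by omega)]
        rw [this]
        have hcq : (c j : ℚ) < 0 := by exact_mod_cast hc
        nlinarith
    constructor
    · have : ((min 0 (c j) - ∑ i, max (A j i) 0 : ℤ) : ℚ) ≤ ((p o j : ℤ) : ℚ) := by
        rw [hkey]
        push_cast at hθc_lo hsumlo ⊢
        linarith
      exact_mod_cast this
    · have : ((p o j : ℤ) : ℚ) ≤ ((max 0 (c j) + ∑ i, max (-A j i) 0 : ℤ) : ℚ) := by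
        rw [hkey]
        push_cast at hθc_up hsumup ⊢
        linarith
      exact_mod_cast this
  -- width of the box
  have hwidth : ∀ j, (max 0 (c j) + ∑ i, max (-A j i) 0 : ℤ)
      - (min 0 (c j) - ∑ i, max (A j i) 0) + 1 ≤ (B : ℤ) := by
    intro j
    have h1 : max 0 (c j) - min 0 (c j) = |c j| := by
      rcases le_or_gt 0 (c j) with hc | hc
      · rw [max_eq_right hc, min_eq_left hc, abs_of_nonneg hc]; ring
      · rw [max_eq_left hc.le, min_eq_right hc.le, abs_of_neg hc]; ring
    have h2 : ∀ i : Fin n, max (-A j i) 0 + max (A j i) 0 = |A j i| := by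
      intro i
      rcases le_or_gt 0 (A j i) with hA | hA
      · have e1 : max (-A j i) 0 = 0 := max_eq_right (by omega)
        have e2 : max (A j i) 0 = A j i := max_eq_left hA
        rw [e1, e2, abs_of_nonneg hA]; ring
      · have e1 : max (-A j i) 0 = -A j i := max_eq_left (by omega)
        have e2 : max (A j i) 0 = 0 := max_eq_right (by omega)
        rw [e1, e2, abs_of_neg hA]; ring
    have h3 : ∑ i, (max (-A j i) 0 + max (A j i) 0) ≤ (n * matNorm A : ℤ) := by
      calc ∑ i, (max (-A j i) 0 + max (A j i) 0) = ∑ i : Fin n, |A j i| := by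
            apply Finset.sum_congr rfl
            intro i _
            exact h2 i
        _ ≤ ∑ _i : Fin n, (matNorm A : ℤ) := by
            apply Finset.sum_le_sum
            intro i _
            rw [Int.abs_eq_natAbs]
            exact_mod_cast entry_le_matNorm j i
        _ = (n * matNorm A : ℤ) := by
            rw [Finset.sum_const]
            simp [mul_comm]
    have h4 : |c j| ≤ (vecNorm c : ℤ) := by
      rw [Int.abs_eq_natAbs]
      exact_mod_cast entry_le_vecNorm (c := c) j
    have h5 : ∑ i, (max (-A j i) 0 + max (A j i) 0)
        = (∑ i, max (-A j i) 0) + ∑ i, max (A j i) 0 := Finset.sum_add_distrib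
    rw [hB]
    push_cast
    omega
  -- the final injection
  have hBpos : 0 < B := by omega
  have hFinj : Function.Injective (fun (o : Option (Σ i : Fin n, Fin (v i))) =>
      fun j : Fin m => (⟨(p o j - (min 0 (c j) - ∑ i, max (A j i) 0)).toNat, by
        have h1 := (hbox o j).1
        have h2 := (hbox o j).2
        have h3 := hwidth j
        omega⟩ : Fin B)) := by
    intro o o' h
    apply hp_inj
    funext j
    have h1 := congrFun h j
    have h2 : (p o j - (min 0 (c j) - ∑ i, max (A j i) 0)).toNat
        = (p o' j - (min 0 (c j) - ∑ i, max (A j i) 0)).toNat := by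
      exact_mod_cast congrArg Fin.val h1
    have h3 := (hbox o j).1
    have h4 := (hbox o' j).1
    omega
  have hcard := Fintype.card_le_of_injective _ hFinj
  have hcard1 : Fintype.card (Option (Σ i : Fin n, Fin (v i))) = N + 1 := by
    simp [Fintype.card_option, Fintype.card_sigma, hN]
  have hcard2 : Fintype.card (Fin m → Fin B) = B ^ m := by
    simp [Fintype.card_fun]
  rw [hcard1, hcard2] at hcard
  exact hcard

end Part1

section Embed
universe u v w
variable {α : Type u} {σ : Type v} {τ : Type w}

/-- Transport an NFA along an injective map of state spaces. -/
theorem exists_nfa_embed (M₀ : NFA α σ) (f : σ → τ) (hf : Function.Injective f) :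
    ∃ M : NFA α τ, M.accepts = M₀.accepts := by
  refine ⟨⟨fun b a => {b' | ∃ x y, f x = b ∧ f y = b' ∧ y ∈ M₀.step x a},
      f '' M₀.start, f '' M₀.accept⟩, ?_⟩
  set M : NFA α τ := ⟨fun b a => {b' | ∃ x y, f x = b ∧ f y = b' ∧ y ∈ M₀.step x a},
      f '' M₀.start, f '' M₀.accept⟩ with hM
  have hstep : ∀ (S : Set σ) a, M.stepSet (f '' S) a = f '' M₀.stepSet S a := by
    intro S a
    ext b'
    constructor
    · intro hb'
      rw [NFA.mem_stepSet] at hb'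
      obtain ⟨t, ht, hb'⟩ := hb'
      obtain ⟨x, y, hfx, hfy, hy⟩ := hb'
      obtain ⟨s, hs, hfs⟩ := ht
      have : s = x := hf (by rw [hfs, hfx])
      subst this
      exact ⟨y, (NFA.mem_stepSet).2 ⟨s, hs, hy⟩, hfy⟩
    · rintro ⟨y, hy, rfl⟩
      rw [NFA.mem_stepSet] at hy
      obtain ⟨s, hs, hy⟩ := hy
      rw [NFA.mem_stepSet]
      exact ⟨f s, ⟨s, hs, rfl⟩, ⟨s, y, rfl, rfl, hy⟩⟩
  have heval : ∀ (w : List α) (S : Set σ), M.evalFrom (f '' S) w = f '' M₀.evalFrom S w := by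
    intro w
    induction w with
    | nil => intro S; simp
    | cons a w ih =>
      intro S
      have h1 : M.evalFrom (f '' S) (a :: w) = M.evalFrom (M.stepSet (f '' S) a) w := rfl
      have h2 : M₀.evalFrom S (a :: w) = M₀.evalFrom (M₀.stepSet S a) w := rfl
      rw [h1, h2, hstep, ih]
  ext w
  show (∃ S ∈ M.accept, S ∈ M.eval w) ↔ (∃ S ∈ M₀.accept, S ∈ M₀.eval w)
  have heq : M.eval w = f '' M₀.eval w := heval w M₀.start
  constructor
  · rintro ⟨b, hb, hbe⟩
    rw [heq] at hbe
    obtain ⟨s, hs, rfl⟩ := hbe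
    obtain ⟨s', hs', hfs'⟩ := hb
    have : s' = s := hf hfs'
    subst this
    exact ⟨s', hs', hs⟩
  · rintro ⟨s, hs, hse⟩
    exact ⟨f s, ⟨s, hs, rfl⟩, by rw [heq]; exact ⟨s, hse, rfl⟩⟩

end Embed

section Core

variable {m n : ℕ} (A : Matrix (Fin m) (Fin n) ℤ) (c : Fin m → ℤ)

/-- The running row sums of a word. -/
def phiRow (w : List (Fin n)) (j : Fin m) : ℤ := ∑ i, A j i * (w.count i : ℤ)

lemma phiRow_nil (j : Fin m) : phiRow A [] j = 0 := by
  simp [phiRow]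

lemma phiRow_append (w : List (Fin n)) (a : Fin n) (j : Fin m) :
    phiRow A (w ++ [a]) j = phiRow A w j + A j a := by
  unfold phiRow
  have h1 : ∀ i : Fin n, ((w ++ [a]).count i : ℤ)
      = (w.count i : ℤ) + if a = i then 1 else 0 := by
    intro i
    rw [List.count_append]
    push_cast [List.count_singleton']
    simp
  calc ∑ i, A j i * ((w ++ [a]).count i : ℤ)
      = ∑ i, (A j i * (w.count i : ℤ) + A j i * (if a = i then 1 else 0)) := by
        apply Finset.sum_congr rfl
        intro i _
        rw [h1 i]; ring
    _ = (∑ i, A j i * (w.count i : ℤ)) + ∑ i, A j i * (if a = i then 1 else 0) :=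
        Finset.sum_add_distrib
    _ = (∑ i, A j i * (w.count i : ℤ)) + A j a := by
        congr 1
        rw [Finset.sum_congr rfl (fun i _ => mul_ite (a = i) (A j i) 1 0)]
        simp
lemma sum_count_eq_length (w : List (Fin n)) : ∑ i, w.count i = w.length := by
  induction w with
  | nil => simp
  | cons a w ih =>
    have h1 : ∀ i : Fin n, (a :: w).count i = w.count i + if i = a then 1 else 0 := by
      intro i
      rw [List.count_cons]
      simp [eq_comm (a := a) (b := i)]
    rw [Finset.sum_congr rfl (fun i _ => h1 i), Finset.sum_add_distrib, ih]
    rw [Finset.sum_ite_eq' univ a (fun _ => 1)]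
    simp [List.length_cons]

lemma phiRow_bound (w : List (Fin n)) (j : Fin m) :
    |phiRow A w j| ≤ (matNorm A : ℤ) * w.length := by
  unfold phiRow
  calc |∑ i, A j i * (w.count i : ℤ)| ≤ ∑ i, |A j i * (w.count i : ℤ)| :=
        Finset.abs_sum_le_sum_abs _ _
    _ ≤ ∑ i, (matNorm A : ℤ) * (w.count i : ℤ) := by
        apply Finset.sum_le_sum
        intro i _
        rw [abs_mul, abs_of_nonneg (by positivity : (0:ℤ) ≤ (w.count i : ℤ))]
        apply mul_le_mul_of_nonneg_right _ (by positivity)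
        rw [Int.abs_eq_natAbs]
        exact_mod_cast entry_le_matNorm j i
    _ = (matNorm A : ℤ) * w.length := by
        rw [← Finset.mul_sum]
        congr 1
        exact_mod_cast congrArg (fun x : ℕ => (x : ℤ)) (sum_count_eq_length w)

lemma Lval_pos : 0 < Lval m n A c := Nat.pow_pos (by positivity)

/-- The core NFA, on the product state space. -/
def coreNFA : NFA (Fin n) (Fin (Lval m n A c) × (Fin m → Fin (2 * Dval m n A c + 1))) where
  step x a := {y | (y.1 : ℕ) = (x.1 : ℕ) + 1 ∧
    ∀ j, ((y.2 j : ℕ) : ℤ) = ((x.2 j : ℕ) : ℤ) + A j a}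
  start := {x | (x.1 : ℕ) = 0 ∧ ∀ j, ((x.2 j : ℕ) : ℤ) = (Dval m n A c : ℤ)}
  accept := {x | ∀ j, ((x.2 j : ℕ) : ℤ) = c j + (Dval m n A c : ℤ)}

lemma coreNFA_eval_spec : ∀ (w : List (Fin n)) x, x ∈ (coreNFA A c).eval w →
    (x.1 : ℕ) = w.length ∧ ∀ j, ((x.2 j : ℕ) : ℤ) = phiRow A w j + (Dval m n A c : ℤ) := by
  intro w
  induction w using List.reverseRecOn with
  | nil =>
    intro x hx
    rw [NFA.eval_nil] at hx
    obtain ⟨h1, h2⟩ := hx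
    exact ⟨h1, fun j => by rw [h2 j, phiRow_nil]; ring⟩
  | append_singleton w a ih =>
    intro x hx
    rw [NFA.eval_append_singleton, NFA.mem_stepSet] at hx
    obtain ⟨t, ht, hstep⟩ := hx
    obtain ⟨h1, h2⟩ := hstep
    obtain ⟨g1, g2⟩ := ih t ht
    constructor
    · rw [h1, g1]; simp
    · intro j
      rw [h2 j, g2 j, phiRow_append]; ring

lemma coreNFA_eval_mem (hn : 0 < n) : ∀ (w : List (Fin n)), w.length < Lval m n A c →
    ∃ x ∈ (coreNFA A c).eval w,
      (∀ j, ((x.2 j : ℕ) : ℤ) = phiRow A w j + (Dval m n A c : ℤ)) := by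
  have hDpos : (0:ℤ) ≤ (Dval m n A c : ℤ) := by positivity
  intro w
  induction w using List.reverseRecOn with
  | nil =>
    intro hw
    refine ⟨⟨⟨0, hw⟩, fun j => ⟨Dval m n A c, by omega⟩⟩, ?_, ?_⟩
    · rw [NFA.eval_nil]
      exact ⟨rfl, fun j => rfl⟩
    · intro j
      rw [phiRow_nil]
      simp
  | append_singleton w a ih =>
    intro hw
    rw [List.length_append, List.length_singleton] at hw
    obtain ⟨x, hx, hxval⟩ := ih (by omega)
    have hxspec := coreNFA_eval_spec A c w x hx
    have hbound : ∀ j, |phiRow A (w ++ [a]) j| ≤ (Dval m n A c : ℤ) := by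
      intro j
      calc |phiRow A (w ++ [a]) j| ≤ (matNorm A : ℤ) * (w ++ [a]).length :=
            phiRow_bound A _ j
        _ ≤ (Dval m n A c : ℤ) := by
            rw [List.length_append, List.length_singleton]
            have h1 : (w.length + 1) ≤ Lval m n A c := by omega
            have h2 : matNorm A * (w.length + 1) ≤ n * matNorm A * Lval m n A c := by
              calc matNorm A * (w.length + 1) ≤ matNorm A * Lval m n A c :=
                    Nat.mul_le_mul_left _ h1
                _ ≤ n * matNorm A * Lval m n A c := by
                    have : 1 * (matNorm A * Lval m n A c) ≤ n * (matNorm A * Lval m n A c) :=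
                      Nat.mul_le_mul_right _ hn
                    calc matNorm A * Lval m n A c
                        = 1 * (matNorm A * Lval m n A c) := by ring
                      _ ≤ n * (matNorm A * Lval m n A c) := this
                      _ = n * matNorm A * Lval m n A c := by ring
            unfold Dval
            push_cast
            exact_mod_cast h2
    refine ⟨⟨⟨w.length + 1, by omega⟩, fun j => ⟨(phiRow A (w ++ [a]) j + Dval m n A c).toNat,
      by obtain ⟨u1, u2⟩ := abs_le.1 (hbound j); omega⟩⟩, ?_, ?_⟩
    · rw [NFA.eval_append_singleton, NFA.mem_stepSet]
      refine ⟨x, hx, ?_, ?_⟩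
      · simp [hxspec.1]
      · intro j
        have h1 : ((phiRow A (w ++ [a]) j + (Dval m n A c : ℤ)).toNat : ℤ)
            = phiRow A (w ++ [a]) j + (Dval m n A c : ℤ) := by
          obtain ⟨u1, u2⟩ := abs_le.1 (hbound j); omega
        show (((phiRow A (w ++ [a]) j + (Dval m n A c : ℤ)).toNat : ℕ) : ℤ) = _
        rw [h1, hxval j, phiRow_append]
        ring
    · intro j
      show (((phiRow A (w ++ [a]) j + (Dval m n A c : ℤ)).toNat : ℕ) : ℤ) = _
      obtain ⟨u1, u2⟩ := abs_le.1 (hbound j); omega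

lemma coreNFA_accepts_iff (hn : 0 < n) (w : List (Fin n)) :
    w ∈ (coreNFA A c).accepts ↔
      (w.length < Lval m n A c ∧ ∀ j, phiRow A w j = c j) := by
  constructor
  · rintro ⟨x, hacc, hev⟩
    obtain ⟨h1, h2⟩ := coreNFA_eval_spec A c w x hev
    constructor
    · rw [← h1]; exact x.1.isLt
    · intro j
      have := hacc j
      rw [h2 j] at this
      omega
  · rintro ⟨hlen, hphi⟩
    obtain ⟨x, hx, hxval⟩ := coreNFA_eval_mem A c hn w hlen
    refine ⟨x, ?_, hx⟩
    intro j
    rw [hxval j, hphi j]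

end Core


theorem nfa_for_minimal_solutions (m n : ℕ) (A : Matrix (Fin m) (Fin n) ℤ)
    (c : Fin m → ℤ) :
    ∃ M : NFA (Fin n) (Fin (kval m n A c)),
      (∀ w ∈ M.accepts, w.length ≤ kval m n A c) ∧
      MinSol A c ⊆ ParikhImage M ∧
      ParikhImage M ⊆ Sol A c := by
  classical
  rcases Nat.eq_zero_or_pos n with hn0 | hn
  · -- degenerate case: empty alphabet
    subst hn0
    have hk : 0 < kval m 0 A c := by unfold kval; omega
    refine ⟨⟨fun _ _ => ∅, Set.univ, {_s | A.mulVec (fun _ => (0 : ℤ)) = c}⟩, ?_, ?_, ?_⟩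
    · intro w _
      cases w with
      | nil => simp
      | cons h t => exact h.elim0
    · intro v hv
      have hfun : (fun i : Fin 0 => ((v i : ℕ) : ℤ)) = fun _ : Fin 0 => (0 : ℤ) :=
        funext fun i => i.elim0
    
      refine ⟨[], ⟨⟨0, hk⟩, ?_, ?_⟩, funext fun i => i.elim0⟩
      · show A.mulVec (fun _ => (0 : ℤ)) = c
        rw [← hfun]
        exact hv.1
      · rw [NFA.eval_nil]
        trivial
    · rintro v ⟨w, hw, hveq⟩
      obtain ⟨S, hS, _⟩ := hw
      show A.mulVec (fun i => ((v i : ℕ) : ℤ)) = c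
      have hfun : (fun i : Fin 0 => ((v i : ℕ) : ℤ)) = fun _ : Fin 0 => (0 : ℤ) :=
        funext fun i => i.elim0
      rw [hfun]
      exact hS
  · -- main case
    have hcard : Fintype.card (Fin (Lval m n A c) × (Fin m → Fin (2 * Dval m n A c + 1)))
        ≤ Fintype.card (Fin (kval m n A c)) := by
      rw [Fintype.card_prod, Fintype.card_fun, Fintype.card_fin, Fintype.card_fin,
        Fintype.card_fin, Fintype.card_fin]
      unfold kval
      have h1 : Lval m n A c * (2 * Dval m n A c + 1) ^ m
          ≤ n * Lval m n A c * (2 * Dval m n A c + 1) ^ m := by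
        apply Nat.mul_le_mul_right
        calc Lval m n A c = 1 * Lval m n A c := (one_mul _).symm
          _ ≤ n * Lval m n A c := Nat.mul_le_mul_right _ hn
      omega
    obtain ⟨f⟩ := Function.Embedding.nonempty_of_card_le hcard
    obtain ⟨M, hMacc⟩ := exists_nfa_embed (coreNFA A c) f f.injective
    have hLk : Lval m n A c ≤ kval m n A c := by
      unfold kval
      have h2 : 1 ≤ (2 * Dval m n A c + 1) ^ m := Nat.one_le_pow _ _ (by omega)
      have h1 : 1 * Lval m n A c * 1 ≤ n * Lval m n A c * (2 * Dval m n A c + 1) ^ m :=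
        Nat.mul_le_mul (Nat.mul_le_mul hn (le_refl _)) h2
      omega
    refine ⟨M, ?_, ?_, ?_⟩
    · intro w hw
      rw [hMacc] at hw
      obtain ⟨hlen, -⟩ := (coreNFA_accepts_iff A c hn w).1 hw
      omega
    · intro v hv
      have hsum := minsol_sum_lt hv
      set wv := (List.finRange n).flatMap (fun i => List.replicate (v i) i) with hwv
      have hcount : ∀ i, wv.count i = v i := by
        intro i
        rw [hwv, List.count_flatMap]
        rw [← Fin.sum_univ_def]
        have : ∀ i' : Fin n, (List.count i ∘ fun i'' => List.replicate (v i'') i'') i'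
            = if i' = i then v i' else 0 := by
          intro i'
          simp [List.count_replicate]
        rw [Finset.sum_congr rfl (fun i' _ => this i')]
        rw [Finset.sum_ite_eq' Finset.univ i (fun i' => v i')]
        simp
      have hlen : wv.length = ∑ i, v i := by
        rw [hwv, List.length_flatMap]
        rw [← Fin.sum_univ_def]
        apply Finset.sum_congr rfl
        intro i _
        simp
      refine ⟨wv, ?_, funext fun i => (hcount i).symm⟩
      rw [hMacc, coreNFA_accepts_iff A c hn]
      constructor
      · omega
      · intro j
        have hSolj : ∑ i, A j i * ((v i : ℕ) : ℤ) = c j := by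
          simpa [Matrix.mulVec, dotProduct] using congrFun hv.1 j
        unfold phiRow
        rw [Finset.sum_congr rfl (fun i _ => by rw [hcount i])]
        exact hSolj
    · rintro v ⟨w, hw, hveq⟩
      rw [hMacc] at hw
      obtain ⟨-, hphi⟩ := (coreNFA_accepts_iff A c hn w).1 hw
      show A.mulVec (fun i => ((v i : ℕ) : ℤ)) = c
      funext j
      have h1 : A.mulVec (fun i => ((v i : ℕ) : ℤ)) j = ∑ i, A j i * ((v i : ℕ) : ℤ) := by
        simp [Matrix.mulVec, dotProduct]
      rw [h1]
      have h2 := hphi j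
      unfold phiRow at h2
      rw [hveq]
      exact h2
end

section
/- Let k t n : ℕ and consider a finite edge-labeled directed graph given by src tgt : Fin t → Fin k and lab : Fin t → Fin n, with two distinguished states q₀ q_f : Fin k, q₀ ≠ q_f. Assume the graph is acyclic in the sense that there exists rank : Fin k → ℕ with rank (src j) < rank (tgt j) for every edge j, and assume no edge has target q₀ and no edge has source q_f. Then the additive submonoid of Fin n → ℕ generated by the Parikh vectors of paths from q₀ to q_f equals the set {x : Fin n → ℕ | ∃ y : Fin t → ℕ, y is a conservation flow ∧ ∀ i, x i = ∑_{j : lab j = i} y j}. -/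
lemma map_src_eq {k t : ℕ} (src tgt : Fin t → Fin k) :
    ∀ (es : List (Fin t)) (h : es ≠ []),
      es.Chain' (fun e₁ e₂ => tgt e₁ = src e₂) →
      es.map src = src (es.head h) :: (es.map tgt).dropLast
  | [e], _, _ => by simp
  | e₁ :: e₂ :: rest, _, hch => by
      have hch' := List.isChain_cons_cons.mp hch
      have ih := map_src_eq src tgt (e₂ :: rest) (by simp) hch'.2
      simp only [List.map_cons] at ih ⊢
      rw [ih]
      simp [List.dropLast_cons_of_ne_nil, hch'.1]

lemma sum_count_eq {α : Type*} [DecidableEq α] {t : ℕ} (f : Fin t → α) (a : α) :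
    ∀ es : List (Fin t),
      ∑ j ∈ Finset.univ.filter (fun j => f j = a), es.count j = (es.map f).count a
  | [] => by simp
  | e :: es => by
      simp only [List.count_cons, List.map_cons, Finset.sum_add_distrib,
        sum_count_eq f a es]
      congr 1
      simp only [beq_iff_eq, Finset.sum_ite_eq, Finset.mem_filter, Finset.mem_univ, true_and]

lemma path_count_flow {k t : ℕ} (src tgt : Fin t → Fin k) {q₀ qf : Fin k}
    (es : List (Fin t)) (h : es ≠ []) (h1 : src (es.head h) = q₀)
    (h2 : tgt (es.getLast h) = qf)
    (hch : es.Chain' (fun e₁ e₂ => tgt e₁ = src e₂))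
    (q : Fin k) (hq0 : q ≠ q₀) (hqf' : q ≠ qf) :
    ∑ j ∈ Finset.univ.filter (fun j => tgt j = q), es.count j
      = ∑ j ∈ Finset.univ.filter (fun j => src j = q), es.count j := by
  rw [sum_count_eq, sum_count_eq, map_src_eq src tgt es h hch, h1, List.count_cons]
  have hmne : es.map tgt ≠ [] := by simp [h]
  conv_lhs => rw [← List.dropLast_append_getLast hmne]
  rw [List.count_append, List.getLast_map]
  simp [h2, hq0, Ne.symm hq0, List.count_singleton, hqf', Ne.symm hqf']

lemma path_nodup {k t : ℕ} {src tgt : Fin t → Fin k} {rank : Fin k → ℕ}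
    (hacyc : ∀ j, rank (src j) < rank (tgt j))
    (es : List (Fin t)) (hch : es.Chain' (fun e₁ e₂ => tgt e₁ = src e₂)) :
    es.Nodup := by
  have h2 : es.Chain' (fun e₁ e₂ => rank (src e₁) < rank (src e₂)) :=
    List.IsChain.imp (R := fun e₁ e₂ => tgt e₁ = src e₂) (fun a b hab => hab ▸ hacyc a) hch
  haveI : IsTrans (Fin t) (fun e₁ e₂ => rank (src e₁) < rank (src e₂)) :=
    ⟨fun _ _ _ => lt_trans⟩
  have hp : es.Pairwise (fun e₁ e₂ => rank (src e₁) < rank (src e₂)) :=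
    List.isChain_iff_pairwise.mp h2
  exact hp.imp fun hab => by rintro rfl; exact lt_irrefl _ hab

lemma fwd_path {k t : ℕ} {src tgt : Fin t → Fin k} {q₀ qf : Fin k}
    {rank : Fin k → ℕ} (hacyc : ∀ j, rank (src j) < rank (tgt j))
    (hq₀ : ∀ j, tgt j ≠ q₀) (y : Fin t → ℕ)
    (hflow : ∀ q : Fin k, q ≠ q₀ → q ≠ qf →
      ∑ j ∈ Finset.univ.filter (fun j => tgt j = q), y j =
        ∑ j ∈ Finset.univ.filter (fun j => src j = q), y j) :
    ∀ (m : ℕ) (j : Fin t),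
      (Finset.univ.sup fun j => rank (tgt j)) - rank (tgt j) ≤ m → 0 < y j →
      ∃ (es : List (Fin t)) (h : es ≠ []), es.head h = j ∧ tgt (es.getLast h) = qf ∧
        es.Chain' (fun e₁ e₂ => tgt e₁ = src e₂) ∧ ∀ e ∈ es, 0 < y e := by
  intro m
  induction m with
  | zero =>
    intro j hm hy
    by_cases hjf : tgt j = qf
    · exact ⟨[j], by simp, rfl, hjf, List.isChain_singleton j, by simpa using hy⟩
    · exfalso
      have h1 := hflow (tgt j) (hq₀ j) hjf
      have hin : 0 < ∑ j' ∈ Finset.univ.filter (fun j' => tgt j' = tgt j), y j' :=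
        lt_of_lt_of_le hy (Finset.single_le_sum (f := y) (fun _ _ => Nat.zero_le _)
          (by simp))
      rw [h1] at hin
      obtain ⟨j', hj'mem, hj'pos⟩ : ∃ j' ∈ Finset.univ.filter (fun j' => src j' = tgt j), 0 < y j' := by
        by_contra hc
        push_neg at hc
        have : ∑ j' ∈ Finset.univ.filter (fun j' => src j' = tgt j), y j' = 0 :=
          Finset.sum_eq_zero fun j' hj' => Nat.le_zero.mp (hc j' hj')
        omega
      simp only [Finset.mem_filter, Finset.mem_univ, true_and] at hj'mem
      have hlt : rank (tgt j) < rank (tgt j') := hj'mem ▸ hacyc j'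
      have hle : rank (tgt j') ≤ Finset.univ.sup fun j => rank (tgt j) :=
        Finset.le_sup (f := fun j => rank (tgt j)) (Finset.mem_univ j')
      omega
  | succ m ih =>
    intro j hm hy
    by_cases hjf : tgt j = qf
    · exact ⟨[j], by simp, rfl, hjf, List.isChain_singleton j, by simpa using hy⟩
    · have h1 := hflow (tgt j) (hq₀ j) hjf
      have hin : 0 < ∑ j' ∈ Finset.univ.filter (fun j' => tgt j' = tgt j), y j' :=
        lt_of_lt_of_le hy (Finset.single_le_sum (f := y) (fun _ _ => Nat.zero_le _)
          (by simp))
      rw [h1] at hin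
      obtain ⟨j', hj'mem, hj'pos⟩ : ∃ j' ∈ Finset.univ.filter (fun j' => src j' = tgt j), 0 < y j' := by
        by_contra hc
        push_neg at hc
        have : ∑ j' ∈ Finset.univ.filter (fun j' => src j' = tgt j), y j' = 0 :=
          Finset.sum_eq_zero fun j' hj' => Nat.le_zero.mp (hc j' hj')
        omega
      simp only [Finset.mem_filter, Finset.mem_univ, true_and] at hj'mem
      have hlt : rank (tgt j) < rank (tgt j') := hj'mem ▸ hacyc j'
      have hle : rank (tgt j') ≤ Finset.univ.sup fun j => rank (tgt j) :=
        Finset.le_sup (f := fun j => rank (tgt j)) (Finset.mem_univ j')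
      obtain ⟨es, hne, hhead, hlast, hch, hpos⟩ := ih j' (by omega) hj'pos
      refine ⟨j :: es, by simp, rfl, ?_, ?_, ?_⟩
      · rwa [List.getLast_cons hne]
      · show List.IsChain _ (j :: es)
        rw [List.isChain_cons]
        exact ⟨fun e he => by rw [List.head?_eq_head hne] at he; cases he; rw [hhead, hj'mem], hch⟩
      · intro e he
        rcases List.mem_cons.mp he with rfl | he
        · exact hy
        · exact hpos e he

lemma exists_full_path {k t : ℕ} {src tgt : Fin t → Fin k} {q₀ qf : Fin k}
    {rank : Fin k → ℕ} (hacyc : ∀ j, rank (src j) < rank (tgt j))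
    (hq₀ : ∀ j, tgt j ≠ q₀) (hqf : ∀ j, src j ≠ qf) (y : Fin t → ℕ)
    (hflow : ∀ q : Fin k, q ≠ q₀ → q ≠ qf →
      ∑ j ∈ Finset.univ.filter (fun j => tgt j = q), y j =
        ∑ j ∈ Finset.univ.filter (fun j => src j = q), y j) :
    ∀ (m : ℕ) (j : Fin t), rank (src j) ≤ m → 0 < y j →
      ∃ (es : List (Fin t)) (h : es ≠ []), src (es.head h) = q₀ ∧
        tgt (es.getLast h) = qf ∧
        es.Chain' (fun e₁ e₂ => tgt e₁ = src e₂) ∧ ∀ e ∈ es, 0 < y e := by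
  intro m
  induction m with
  | zero =>
    intro j hm hy
    by_cases hj0 : src j = q₀
    · obtain ⟨es, hne, hhead, hlast, hch, hpos⟩ :=
        fwd_path hacyc hq₀ y hflow (Finset.univ.sup fun j => rank (tgt j)) j
          (Nat.sub_le _ _) hy
      exact ⟨es, hne, by rw [hhead, hj0], hlast, hch, hpos⟩
    · exfalso
      have h1 := hflow (src j) hj0 (hqf j)
      have hout : 0 < ∑ j' ∈ Finset.univ.filter (fun j' => src j' = src j), y j' :=
        lt_of_lt_of_le hy (Finset.single_le_sum (f := y) (fun _ _ => Nat.zero_le _)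
          (by simp))
      rw [← h1] at hout
      obtain ⟨j', hj'mem, hj'pos⟩ : ∃ j' ∈ Finset.univ.filter (fun j' => tgt j' = src j), 0 < y j' := by
        by_contra hc
        push_neg at hc
        have : ∑ j' ∈ Finset.univ.filter (fun j' => tgt j' = src j), y j' = 0 :=
          Finset.sum_eq_zero fun j' hj' => Nat.le_zero.mp (hc j' hj')
        omega
      simp only [Finset.mem_filter, Finset.mem_univ, true_and] at hj'mem
      have := hacyc j'
      rw [hj'mem] at this
      omega
  | succ m ih =>
    intro j hm hy
    by_cases hj0 : src j = q₀
    · obtain ⟨es, hne, hhead, hlast, hch, hpos⟩ :=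
        fwd_path hacyc hq₀ y hflow (Finset.univ.sup fun j => rank (tgt j)) j
          (Nat.sub_le _ _) hy
      exact ⟨es, hne, by rw [hhead, hj0], hlast, hch, hpos⟩
    · have h1 := hflow (src j) hj0 (hqf j)
      have hout : 0 < ∑ j' ∈ Finset.univ.filter (fun j' => src j' = src j), y j' :=
        lt_of_lt_of_le hy (Finset.single_le_sum (f := y) (fun _ _ => Nat.zero_le _)
          (by simp))
      rw [← h1] at hout
      obtain ⟨j', hj'mem, hj'pos⟩ : ∃ j' ∈ Finset.univ.filter (fun j' => tgt j' = src j), 0 < y j' := by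
        by_contra hc
        push_neg at hc
        have : ∑ j' ∈ Finset.univ.filter (fun j' => tgt j' = src j), y j' = 0 :=
          Finset.sum_eq_zero fun j' hj' => Nat.le_zero.mp (hc j' hj')
        omega
      simp only [Finset.mem_filter, Finset.mem_univ, true_and] at hj'mem
      have hlt : rank (src j') < rank (src j) := by
        have := hacyc j'; rw [hj'mem] at this; omega
      exact ih j' (by omega) hj'pos



/-- A (nonempty) path from `q₀` to `qf` in an edge-labeled directed graph given by
source and target maps `src tgt : Fin t → Fin k`: a nonempty list of edges starting at
`q₀`, ending at `qf`, in which consecutive edges are compatible. -/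
def IsPath {k t : ℕ} (src tgt : Fin t → Fin k) (q₀ qf : Fin k)
    (es : List (Fin t)) : Prop :=
  ∃ h : es ≠ [], src (es.head h) = q₀ ∧ tgt (es.getLast h) = qf ∧
    es.Chain' fun e₁ e₂ => tgt e₁ = src e₂

theorem parikh_vectors_of_paths_eq_flows (k t n : ℕ)
    (src tgt : Fin t → Fin k) (lab : Fin t → Fin n)
    (q₀ qf : Fin k) (hne : q₀ ≠ qf)
    (rank : Fin k → ℕ) (hacyc : ∀ j : Fin t, rank (src j) < rank (tgt j))
    (hq₀ : ∀ j : Fin t, tgt j ≠ q₀) (hqf : ∀ j : Fin t, src j ≠ qf) :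
    (AddSubmonoid.closure
        {v : Fin n → ℕ | ∃ es : List (Fin t), IsPath src tgt q₀ qf es ∧
          v = fun i => (es.map lab).count i} : Set (Fin n → ℕ)) =
      {x : Fin n → ℕ | ∃ y : Fin t → ℕ,
        (∀ q : Fin k, q ≠ q₀ → q ≠ qf →
          ∑ j ∈ Finset.univ.filter fun j => tgt j = q, y j =
            ∑ j ∈ Finset.univ.filter fun j => src j = q, y j) ∧
        ∀ i : Fin n, x i = ∑ j ∈ Finset.univ.filter fun j => lab j = i, y j} := by
  ext x
  simp only [Set.mem_setOf_eq, SetLike.mem_coe]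
  constructor
  · intro hx
    induction hx using AddSubmonoid.closure_induction with
    | mem v hv =>
      obtain ⟨es, ⟨h, h1, h2, hch⟩, rfl⟩ := hv
      refine ⟨fun j => es.count j, ?_, ?_⟩
      · intro q hq1 hq2
        exact path_count_flow src tgt es h h1 h2 hch q hq1 hq2
      · intro i
        exact (sum_count_eq lab i es).symm
    | zero => exact ⟨0, by simp, by simp⟩
    | add a b _ _ ha hb =>
      obtain ⟨y₁, hf₁, hx₁⟩ := ha
      obtain ⟨y₂, hf₂, hx₂⟩ := hb
      refine ⟨y₁ + y₂, ?_, ?_⟩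
      · intro q hq1 hq2
        simp only [Pi.add_apply, Finset.sum_add_distrib, hf₁ q hq1 hq2, hf₂ q hq1 hq2]
      · intro i
        simp only [Pi.add_apply, Finset.sum_add_distrib, ← hx₁ i, ← hx₂ i]
  · rintro ⟨y, hflow, hx⟩
    have hxfun : x = fun i => ∑ j ∈ Finset.univ.filter (fun j => lab j = i), y j :=
      funext hx
    suffices H : ∀ (N : ℕ) (y : Fin t → ℕ), (∑ j, y j) ≤ N →
        (∀ q : Fin k, q ≠ q₀ → q ≠ qf →
          ∑ j ∈ Finset.univ.filter (fun j => tgt j = q), y j =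
            ∑ j ∈ Finset.univ.filter (fun j => src j = q), y j) →
        (fun i => ∑ j ∈ Finset.univ.filter (fun j => lab j = i), y j) ∈
          AddSubmonoid.closure
            {v : Fin n → ℕ | ∃ es : List (Fin t), IsPath src tgt q₀ qf es ∧
              v = fun i => (es.map lab).count i} by
      rw [hxfun]; exact H (∑ j, y j) y le_rfl hflow
    intro N
    induction N with
    | zero =>
      intro y hN _
      have hy0 : ∀ j, y j = 0 := by
        intro j
        have := Finset.single_le_sum (f := y) (fun _ _ => Nat.zero_le _)
          (Finset.mem_univ j)
        omega
      have : (fun i => ∑ j ∈ Finset.univ.filter (fun j => lab j = i), y j)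
          = (0 : Fin n → ℕ) := by
        funext i; simp [hy0]
      rw [this]
      exact zero_mem _
    | succ N ih =>
      intro y hN hfl
      by_cases h0 : ∀ j, y j = 0
      · have : (fun i => ∑ j ∈ Finset.univ.filter (fun j => lab j = i), y j)
            = (0 : Fin n → ℕ) := by
          funext i; simp [h0]
        rw [this]
        exact zero_mem _
      · push_neg at h0
        obtain ⟨j₀, hj₀⟩ := h0
        obtain ⟨es, hne', h1, h2, hch, hpos⟩ :=
          exists_full_path hacyc hq₀ hqf y hfl (rank (src j₀)) j₀ le_rfl
            (Nat.pos_of_ne_zero hj₀)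
        have hnd : es.Nodup := path_nodup hacyc es hch
        have hcle : ∀ j, es.count j ≤ y j := by
          intro j
          by_cases hj : j ∈ es
          · exact le_trans (List.nodup_iff_count_le_one.mp hnd j) (hpos j hj)
          · simp [List.count_eq_zero_of_not_mem hj]
        have hyc : ∀ j, (y j - es.count j) + es.count j = y j :=
          fun j => Nat.sub_add_cancel (hcle j)
        set y' : Fin t → ℕ := fun j => y j - es.count j with hy'
        have hsum : ∑ j, y' j ≤ N := by
          have e1 : ∑ j, y' j + ∑ j, es.count j = ∑ j, y j := by
            rw [← Finset.sum_add_distrib]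
            exact Finset.sum_congr rfl fun j _ => hyc j
          have hhead : 0 < es.count (es.head hne') :=
            List.count_pos_iff.mpr (List.head_mem hne')
          have e2 : 1 ≤ ∑ j, es.count j :=
            le_trans hhead (Finset.single_le_sum (f := fun j => es.count j)
              (fun _ _ => Nat.zero_le _) (Finset.mem_univ _))
          omega
        have hfl' : ∀ q : Fin k, q ≠ q₀ → q ≠ qf →
            ∑ j ∈ Finset.univ.filter (fun j => tgt j = q), y' j =
              ∑ j ∈ Finset.univ.filter (fun j => src j = q), y' j := by
          intro q hq1 hq2
          have e1 : ∑ j ∈ Finset.univ.filter (fun j => tgt j = q), y' j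
              + ∑ j ∈ Finset.univ.filter (fun j => tgt j = q), es.count j
              = ∑ j ∈ Finset.univ.filter (fun j => tgt j = q), y j := by
            rw [← Finset.sum_add_distrib]
            exact Finset.sum_congr rfl fun j _ => hyc j
          have e2 : ∑ j ∈ Finset.univ.filter (fun j => src j = q), y' j
              + ∑ j ∈ Finset.univ.filter (fun j => src j = q), es.count j
              = ∑ j ∈ Finset.univ.filter (fun j => src j = q), y j := by
            rw [← Finset.sum_add_distrib]
            exact Finset.sum_congr rfl fun j _ => hyc j
          have e3 := path_count_flow src tgt es hne' h1 h2 hch q hq1 hq2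
          have e4 := hfl q hq1 hq2
          omega
        have hmem := ih y' hsum hfl'
        have hgen : (fun i => ((es.map lab).count i : ℕ)) ∈
            {v : Fin n → ℕ | ∃ es : List (Fin t), IsPath src tgt q₀ qf es ∧
              v = fun i => (es.map lab).count i} :=
          ⟨es, ⟨hne', h1, h2, hch⟩, rfl⟩
        have hadd := AddSubmonoid.add_mem _ hmem (AddSubmonoid.subset_closure hgen)
        convert hadd using 1
        funext i
        simp only [Pi.add_apply]
        rw [← sum_count_eq lab i es, ← Finset.sum_add_distrib]
        exact Finset.sum_congr rfl fun j _ => (hyc j).symm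
end

section
/- Let V be a finite type, E : V → V → Prop a relation, and K : ℕ such that for every v : V the number of u with u ≠ v and E v u is at most K. Let A B : Finset V with A = B or A and B disjoint, and suppose that for all a ∈ A and b ∈ B with a ≠ b, either E a b or E b a holds. Then A.card ≤ 2·K + 1 or B.card ≤ 2·K + 1. -/
theorem noisy_pair_small_class {V : Type*} [Fintype V] [DecidableEq V]
    (E : V → V → Prop) [DecidableRel E] (K : ℕ)
    (hdeg : ∀ v : V, (Finset.univ.filter fun u => u ≠ v ∧ E v u).card ≤ K)
    (A B : Finset V) (hAB : A = B ∨ Disjoint A B)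
    (hnoisy : ∀ a ∈ A, ∀ b ∈ B, a ≠ b → E a b ∨ E b a) :
    A.card ≤ 2 * K + 1 ∨ B.card ≤ 2 * K + 1 := by
  classical
  by_contra h
  push_neg at h
  obtain ⟨hA, hB⟩ := h
  set P : Finset (V × V) := (A ×ˢ B).filter (fun p => p.1 ≠ p.2) with hPdef
  have hsplit : P.card ≤ K * A.card + K * B.card := by
    have h1 : (P.filter (fun p => E p.1 p.2)).card ≤ K * A.card := by
      rw [Finset.card_eq_sum_card_fiberwise
        (f := fun p => p.1) (t := A)
        (by intro p hp
            simp only [Finset.mem_coe, hPdef, Finset.mem_filter, Finset.mem_product] at hp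
            exact hp.1.1.1)]
      calc ∑ a ∈ A, ((P.filter (fun p => E p.1 p.2)).filter (fun p => p.1 = a)).card
          ≤ ∑ a ∈ A, K := by
            refine Finset.sum_le_sum fun a _ => ?_
            refine le_trans (Finset.card_le_card_of_injOn (fun p => p.2)
              (fun p hp => ?_) (fun p hp q hq hpq => ?_)) (hdeg a)
            · simp only [Finset.mem_coe, hPdef, Finset.mem_filter, Finset.mem_product,
                Finset.mem_univ, true_and] at hp ⊢
              obtain ⟨⟨⟨⟨_, _⟩, hne⟩, hE⟩, heq⟩ := hp
              subst heq
              exact ⟨fun hc => hne hc.symm, hE⟩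
            · simp only [Finset.coe_filter, Set.mem_setOf_eq] at hp hq
              exact Prod.ext (hp.2.trans hq.2.symm) hpq
          _ = K * A.card := by rw [Finset.sum_const, smul_eq_mul, mul_comm]
    have h2 : (P.filter (fun p => ¬ E p.1 p.2)).card ≤ K * B.card := by
      rw [Finset.card_eq_sum_card_fiberwise
        (f := fun p => p.2) (t := B)
        (by intro p hp
            simp only [Finset.mem_coe, hPdef, Finset.mem_filter, Finset.mem_product] at hp
            exact hp.1.1.2)]
      calc ∑ b ∈ B, ((P.filter (fun p => ¬ E p.1 p.2)).filter (fun p => p.2 = b)).card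
          ≤ ∑ b ∈ B, K := by
            refine Finset.sum_le_sum fun b _ => ?_
            refine le_trans (Finset.card_le_card_of_injOn (fun p => p.1)
              (fun p hp => ?_) (fun p hp q hq hpq => ?_)) (hdeg b)
            · simp only [Finset.mem_coe, hPdef, Finset.mem_filter, Finset.mem_product,
                Finset.mem_univ, true_and] at hp ⊢
              obtain ⟨⟨⟨⟨ha, hb⟩, hne⟩, hnE⟩, heq⟩ := hp
              subst heq
              refine ⟨hne, ?_⟩
              rcases hnoisy p.1 ha p.2 hb hne with h | h
              · exact absurd h hnE
              · exact h
            · simp only [Finset.coe_filter, Set.mem_setOf_eq] at hp hq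
              exact Prod.ext hpq (hp.2.trans hq.2.symm)
          _ = K * B.card := by rw [Finset.sum_const, smul_eq_mul, mul_comm]
    have h3 := Finset.card_filter_add_card_filter_not
      (s := P) (p := fun p => E p.1 p.2)
    omega
  rcases hAB with rfl | hdisj
  · -- A = B case
    have hdiag : ((A ×ˢ A).filter (fun p => p.1 = p.2)).card = A.card := by
      have : (A ×ˢ A).filter (fun p => p.1 = p.2) = A.image (fun a => (a, a)) := by
        ext ⟨x, y⟩
        simp only [Finset.mem_filter, Finset.mem_product, Finset.mem_image, Prod.mk.injEq]
        constructor
        · rintro ⟨⟨hx, _⟩, rfl⟩; exact ⟨x, hx, rfl, rfl⟩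
        · rintro ⟨a, ha, rfl, rfl⟩; exact ⟨⟨ha, ha⟩, rfl⟩
      rw [this, Finset.card_image_of_injective _ (fun a b hab => (Prod.mk.injEq _ _ _ _ ▸ hab).1)]
    have hcard : A.card * A.card = A.card + P.card := by
      have h4 := Finset.card_filter_add_card_filter_not
        (s := A ×ˢ A) (p := fun p => p.1 = p.2)
      rw [hdiag, Finset.card_product] at h4
      have : P = (A ×ˢ A).filter (fun p => ¬ p.1 = p.2) := rfl
      rw [this]
      omega
    nlinarith [hA, hsplit, hcard]
  · -- disjoint case
    have hPeq : P = A ×ˢ B := by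
      rw [hPdef]
      refine Finset.filter_true_of_mem fun p hp => ?_
      simp only [Finset.mem_product] at hp
      exact fun hc => Finset.disjoint_left.mp hdisj hp.1 (hc ▸ hp.2)
    rw [hPeq, Finset.card_product] at hsplit
    have h5 : (2 * K + 2) * B.card ≤ A.card * B.card := Nat.mul_le_mul_right _ hA
    have h6 : (2 * K + 2) * A.card ≤ A.card * B.card := by
      calc (2 * K + 2) * A.card ≤ B.card * A.card := Nat.mul_le_mul_right _ hB
        _ = A.card * B.card := Nat.mul_comm _ _
    nlinarith [hsplit, h5, h6, hA, hB]
end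

section
/- Let V be a finite type and m : V → V → ℕ a symmetric function with m v v = 0 for all v (a finite undirected multigraph). Then there exist k ≥ 1 and a simple graph on V × Fin k (i.e., a symmetric irreflexive relation Adj on V × Fin k) such that for all v u : V and every i : Fin k, the number of j : Fin k with Adj (v, i) (u, j) equals m v u. -/
lemma aux_card_lt {k c : ℕ} (hc : c ≤ k) :
    {x : Fin k | (x : ℕ) < c}.ncard = c := by
  have h : {x : Fin k | (x : ℕ) < c} = Set.range (Fin.castLE hc) := by
    ext x
    constructor
    · intro hx
      exact ⟨⟨x, hx⟩, rfl⟩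
    · rintro ⟨y, rfl⟩
      exact y.isLt
  rw [h, Set.image_univ.symm, Set.ncard_image_of_injective _ (Fin.castLE_injective hc),
    Set.ncard_univ, Nat.card_eq_fintype_card, Fintype.card_fin]

lemma aux_card {k c : ℕ} (hc : c ≤ k) (f : Fin k → Fin k) (hf : Function.Bijective f) :
    {j : Fin k | ((f j : ℕ)) < c}.ncard = c := by
  have h1 : {j : Fin k | (f j : ℕ) < c} = f ⁻¹' {x : Fin k | (x : ℕ) < c} := rfl
  set e := Equiv.ofBijective f hf with he
  have h2 : f ⁻¹' {x : Fin k | (x : ℕ) < c} = e.symm '' {x : Fin k | (x : ℕ) < c} := by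
    ext j
    simp only [Set.mem_preimage, Set.mem_image, Set.mem_setOf_eq]
    constructor
    · intro hj
      exact ⟨f j, hj, e.symm_apply_apply j⟩
    · rintro ⟨x, hx, rfl⟩
      have hx2 : f (e.symm x) = x := e.apply_symm_apply x
      rw [hx2]
      exact hx
  rw [h1, h2, Set.ncard_image_of_injective _ e.symm.injective, aux_card_lt hc]

theorem multigraph_has_simple_cover {V : Type*} [Fintype V]
    (m : V → V → ℕ) (hsymm : ∀ v u : V, m v u = m u v)
    (hirr : ∀ v : V, m v v = 0) :
    ∃ k : ℕ, 1 ≤ k ∧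
      ∃ Adj : V × Fin k → V × Fin k → Prop,
        Symmetric Adj ∧ Irreflexive Adj ∧
        ∀ (v u : V) (i : Fin k),
          {j : Fin k | Adj (v, i) (u, j)}.ncard = m v u := by
  classical
  set N := Finset.univ.sup (fun p : V × V => m p.1 p.2) with hN
  set k := N + 1 with hk
  have hm : ∀ v u, m v u ≤ k := fun v u =>
    le_trans (Finset.le_sup (f := fun p : V × V => m p.1 p.2) (Finset.mem_univ (v, u)))
      (Nat.le_succ N)
  haveI : NeZero k := ⟨Nat.succ_ne_zero N⟩
  let e := Fintype.equivFin V
  refine ⟨k, Nat.le_add_left 1 N, ?_⟩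
  refine ⟨fun p q =>
    if e p.1 < e q.1 then ((q.2 : ℕ) + k - (p.2 : ℕ)) % k < m p.1 q.1
    else if e q.1 < e p.1 then ((p.2 : ℕ) + k - (q.2 : ℕ)) % k < m p.1 q.1
    else False, ?_, ?_, ?_⟩
  · intro p q h
    rcases lt_trichotomy (e p.1) (e q.1) with h1 | h1 | h1
    · rw [if_pos h1] at h
      rw [if_neg (not_lt.2 h1.le), if_pos h1, hsymm]
      exact h
    · rw [if_neg h1.not_gt, if_neg (h1 ▸ lt_irrefl _)] at h
      exact h.elim
    · rw [if_neg h1.not_gt, if_pos h1] at h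
      rw [if_pos h1, hsymm]
      exact h
  · intro p h
    simp only [lt_irrefl, if_neg, if_false] at h
  · intro v u i
    rcases lt_trichotomy (e v) (e u) with h1 | h1 | h1
    · simp only [if_pos h1]
      have heq : ∀ j : Fin k, ((j : ℕ) + k - (i : ℕ)) % k = ((j - i : Fin k) : ℕ) := by
        intro j
        rw [Fin.sub_def]
        congr 1
        omega
      have : {j : Fin k | ((j : ℕ) + k - (i : ℕ)) % k < m v u}
          = {j : Fin k | ((j - i : Fin k) : ℕ) < m v u} := by
        ext j; simp [heq j]
      rw [this]
      exact aux_card (hm v u) (fun j => j - i) (sub_left_injective.bijective_of_finite)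
    · have hvu : v = u := e.injective h1
      subst hvu
      simp only [lt_self_iff_false, if_false]
      rw [Set.setOf_false, Set.ncard_empty, hirr]
    · simp only [if_neg (asymm h1), if_pos h1]
      have heq : ∀ j : Fin k, ((i : ℕ) + k - (j : ℕ)) % k = ((i - j : Fin k) : ℕ) := by
        intro j
        rw [Fin.sub_def]
        congr 1
        omega
      have : {j : Fin k | ((i : ℕ) + k - (j : ℕ)) % k < m v u}
          = {j : Fin k | ((i - j : Fin k) : ℕ) < m v u} := by
        ext j; simp [heq j]
      rw [this]
      exact aux_card (hm v u) (fun j => i - j) (sub_right_injective.bijective_of_finite)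
end

section
/- Let V be a finite type, E : V → V → Prop an irreflexive relation (a finite simple directed graph), and let A B : Finset V be disjoint with A ∪ B = Finset.univ. Suppose that for every a ∈ A, the number of v ∈ A with E a v equals the number of v ∈ B with E a v, and that for every b ∈ B, the number of a ∈ A with E a b is exactly 1. Then B.card ≤ A.card · (A.card − 1). -/
theorem gp2_counterexample_counting {V : Type*} [Fintype V] [DecidableEq V]
    (E : V → V → Prop) [DecidableRel E] (hirr : Irreflexive E)
    (A B : Finset V) (hdisj : Disjoint A B) (hunion : A ∪ B = Finset.univ)
    (hA : ∀ a ∈ A, (A.filter fun v => E a v).card = (B.filter fun v => E a v).card)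
    (hB : ∀ b ∈ B, (A.filter fun a => E a b).card = 1) :
    B.card ≤ A.card * (A.card - 1) := by
  have hdouble : ∑ b ∈ B, (A.filter fun a => E a b).card
      = ∑ a ∈ A, (B.filter fun v => E a v).card := by
    simp only [Finset.card_filter]
    exact Finset.sum_comm
  have hBcard : B.card = ∑ a ∈ A, (A.filter fun v => E a v).card := by
    calc B.card = ∑ b ∈ B, 1 := by simp
    _ = ∑ b ∈ B, (A.filter fun a => E a b).card := by
        exact Finset.sum_congr rfl fun b hb => (hB b hb).symm
    _ = ∑ a ∈ A, (B.filter fun v => E a v).card := hdouble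
    _ = ∑ a ∈ A, (A.filter fun v => E a v).card := by
        exact Finset.sum_congr rfl fun a ha => (hA a ha).symm
  rw [hBcard]
  have hbound : ∀ a ∈ A, (A.filter fun v => E a v).card ≤ A.card - 1 := by
    intro a ha
    have hsub : (A.filter fun v => E a v) ⊆ A.erase a := by
      intro v hv
      simp only [Finset.mem_filter] at hv
      refine Finset.mem_erase.mpr ⟨?_, hv.1⟩
      rintro rfl; exact hirr _ hv.2
    calc (A.filter fun v => E a v).card ≤ (A.erase a).card :=
          Finset.card_le_card hsub
      _ = A.card - 1 := Finset.card_erase_of_mem ha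
  calc ∑ a ∈ A, (A.filter fun v => E a v).card ≤ ∑ _a ∈ A, (A.card - 1) :=
        Finset.sum_le_sum hbound
    _ = A.card * (A.card - 1) := by rw [Finset.sum_const, smul_eq_mul]
end

section
/- For all a b : ℕ, we have b ≤ a · (a − 1) if and only if there exists an irreflexive relation E on (Fin a ⊕ Fin b) such that: for every v : Fin a, the number of u : Fin a with E (inl v) (inl u) equals the number of w : Fin b with E (inl v) (inr w), and for every w : Fin b there is exactly one v : Fin a with E (inl v) (inr w). -/
theorem gp2_counterexample_spectrum_characterization (a b : ℕ) :
    b ≤ a * (a - 1) ↔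
      ∃ E : (Fin a ⊕ Fin b) → (Fin a ⊕ Fin b) → Prop,
        Irreflexive E ∧
        (∀ v : Fin a,
          {u : Fin a | E (Sum.inl v) (Sum.inl u)}.ncard =
            {w : Fin b | E (Sum.inl v) (Sum.inr w)}.ncard) ∧
        (∀ w : Fin b, ∃! v : Fin a, E (Sum.inl v) (Sum.inr w)) := by
  constructor
  · intro hb
    -- embed Fin b into off-diagonal pairs
    have hcard : Fintype.card (Fin b) ≤ Fintype.card {p : Fin a × Fin a // p.1 ≠ p.2} := by
      have h1 : Fintype.card {p : Fin a × Fin a // p.1 ≠ p.2}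
          = (Finset.univ.filter fun p : Fin a × Fin a => p.1 ≠ p.2).card :=
        Fintype.card_subtype _
      have h2 : (Finset.univ.filter fun p : Fin a × Fin a => p.1 ≠ p.2)
          = (Finset.univ : Finset (Fin a)).offDiag := by
        ext p
        simp [Finset.mem_offDiag]
      have h3 : ((Finset.univ : Finset (Fin a)).offDiag).card = a * a - a := by
        simp [Finset.offDiag_card]
      simp only [Fintype.card_fin, h1, h2, h3]
      have : a * (a - 1) = a * a - a := by
        rw [Nat.mul_sub, Nat.mul_one]
      omega
    obtain ⟨g⟩ := Function.Embedding.nonempty_iff_card_le.mpr hcard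
    refine ⟨fun x y => match x, y with
      | Sum.inl v, Sum.inl u => ∃ w, (g w : Fin a × Fin a) = (v, u)
      | Sum.inl v, Sum.inr w => (g w : Fin a × Fin a).1 = v
      | Sum.inr _, _ => False, ?_, ?_, ?_⟩
    · rintro (v | w) h
      · obtain ⟨w, hw⟩ := h
        exact (g w).2 (by rw [hw])
      · exact h
    · intro v
      show {u : Fin a | ∃ w, (g w : Fin a × Fin a) = (v, u)}.ncard
          = {w : Fin b | (g w : Fin a × Fin a).1 = v}.ncard
      have himg : {u : Fin a | ∃ w, (g w : Fin a × Fin a) = (v, u)}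
          = (fun w => (g w : Fin a × Fin a).2) '' {w : Fin b | (g w : Fin a × Fin a).1 = v} := by
        ext u
        constructor
        · rintro ⟨w, hw⟩
          exact ⟨w, by simp [hw], by simp [hw]⟩
        · rintro ⟨w, hw1, hw2⟩
          exact ⟨w, by ext <;> simp_all⟩
      rw [himg]
      refine Set.ncard_image_of_injOn ?_
      intro w1 h1 w2 h2 heq
      apply g.injective
      apply Subtype.ext
      exact Prod.ext (h1.trans h2.symm) heq
    · intro w
      exact ⟨(g w : Fin a × Fin a).1, rfl, fun v hv => hv.symm⟩
  · rintro ⟨E, hirr, hcount, huniq⟩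
    set f : Fin b → Fin a := fun w => (huniq w).choose with hf
    have hfE : ∀ w, E (Sum.inl (f w)) (Sum.inr w) := fun w => (huniq w).choose_spec.1
    have hfu : ∀ w v, E (Sum.inl v) (Sum.inr w) → v = f w :=
      fun w v h => (huniq w).choose_spec.2 v h
    have hb : b = ∑ v : Fin a, (Finset.univ.filter fun w => f w = v).card := by
      have := Finset.card_eq_sum_card_fiberwise
        (f := f) (s := Finset.univ) (t := Finset.univ) (fun x _ => Finset.mem_univ _)
      simpa using this
    have hle : ∀ v : Fin a, (Finset.univ.filter fun w => f w = v).card ≤ a - 1 := by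
      intro v
      have hset : {w : Fin b | E (Sum.inl v) (Sum.inr w)} = {w : Fin b | f w = v} := by
        ext w
        exact ⟨fun h => (hfu w v h).symm, fun h => h ▸ hfE w⟩
      have hcard1 : (Finset.univ.filter fun w => f w = v).card
          = {w : Fin b | f w = v}.ncard := by
        rw [Set.ncard_eq_toFinset_card']
        congr 1
        ext w
        simp
      rw [hcard1, ← hset, ← hcount v]
      have hsub : {u : Fin a | E (Sum.inl v) (Sum.inl u)} ⊆ {v}ᶜ := by
        intro u hu hmem
        simp only [Set.mem_singleton_iff] at hmem
        exact hirr (Sum.inl v) (hmem ▸ hu)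
      calc {u : Fin a | E (Sum.inl v) (Sum.inl u)}.ncard
          ≤ ({v}ᶜ : Set (Fin a)).ncard := Set.ncard_le_ncard hsub (Set.toFinite _)
        _ ≤ a - 1 := by
            have h1 : ({v} : Set (Fin a)).ncard + ({v}ᶜ : Set (Fin a)).ncard
                = Nat.card (Fin a) := Set.ncard_add_ncard_compl _
            simp [Set.ncard_singleton] at h1
            omega
    calc b = ∑ v : Fin a, (Finset.univ.filter fun w => f w = v).card := hb
      _ ≤ ∑ _v : Fin a, (a - 1) := Finset.sum_le_sum (fun v _ => hle v)
      _ = a * (a - 1) := by simp [Finset.sum_const, Finset.card_univ, mul_comm]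
end

section
/- The set S := {(x, y) : ℕ × ℕ | y ≤ x · (x − 1)} is not semilinear: there is no finite family of linear subsets of ℕ × ℕ whose union equals S. -/
/-- A subset of `ℕ × ℕ` is linear if it consists of all vectors obtained from a base
vector `b` by adding arbitrary natural-number combinations of finitely many period
vectors. -/
def IsLinearSetNatProd (L : Set (ℕ × ℕ)) : Prop :=
  ∃ (b : ℕ × ℕ) (r : ℕ) (p : Fin r → ℕ × ℕ),
    L = {v | ∃ k : Fin r → ℕ, v = b + ∑ i : Fin r, k i • p i}

lemma linear_subset_bound {L : Set (ℕ × ℕ)} (hL : IsLinearSetNatProd L)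
    (hsub : ∀ v ∈ L, v.2 ≤ v.1 * (v.1 - 1)) :
    ∃ B C : ℕ, ∀ v ∈ L, v.2 ≤ B + C * v.1 := by
  obtain ⟨b, r, p, rfl⟩ := hL
  have h0 : ∀ j : Fin r, (p j).1 = 0 → (p j).2 = 0 := by
    intro j hj
    by_contra hc
    have hc' : 1 ≤ (p j).2 := Nat.one_le_iff_ne_zero.mpr hc
    set t := b.1 * (b.1 - 1) + 1 with ht
    have hsum : (∑ i : Fin r, (if i = j then t else 0) • p i) = t • p j := by
      simp [Finset.sum_ite_eq', Finset.mem_univ]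
    have hmem : (b + t • p j) ∈ {v | ∃ k : Fin r → ℕ, v = b + ∑ i, k i • p i} :=
      ⟨fun i => if i = j then t else 0, by rw [hsum]⟩
    have hle := hsub _ hmem
    simp only [Set.mem_setOf_eq, Prod.fst_add, Prod.snd_add, Prod.smul_fst,
      Prod.smul_snd, smul_eq_mul, hj, Nat.mul_zero, Nat.add_zero] at hle
    have : t ≤ t * (p j).2 := Nat.le_mul_of_pos_right t hc'
    omega
  set C := Finset.univ.sup (fun j : Fin r => (p j).2) with hC
  refine ⟨b.2, C, ?_⟩
  rintro v ⟨k, rfl⟩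
  have hj : ∀ j : Fin r, (p j).2 ≤ C * (p j).1 := by
    intro j
    rcases Nat.eq_zero_or_pos (p j).1 with h | h
    · simp [h0 j h]
    · calc (p j).2 ≤ C := hC ▸ Finset.le_sup (f := fun j : Fin r => (p j).2) (Finset.mem_univ j)
        _ = C * 1 := (Nat.mul_one C).symm
        _ ≤ C * (p j).1 := Nat.mul_le_mul_left C h
  have h1 : (b + ∑ i : Fin r, k i • p i).1 = b.1 + ∑ i : Fin r, k i * (p i).1 := by
    simp [Prod.fst_sum]
  have h2 : (b + ∑ i : Fin r, k i • p i).2 = b.2 + ∑ i : Fin r, k i * (p i).2 := by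
    simp [Prod.snd_sum]
  rw [h1, h2]
  have : ∑ i : Fin r, k i * (p i).2 ≤ C * ∑ i : Fin r, k i * (p i).1 := by
    rw [Finset.mul_sum]
    refine Finset.sum_le_sum fun i _ => ?_
    calc k i * (p i).2 ≤ k i * (C * (p i).1) := Nat.mul_le_mul_left _ (hj i)
      _ = C * (k i * (p i).1) := by ring
  calc b.2 + ∑ i : Fin r, k i * (p i).2 ≤ b.2 + C * ∑ i : Fin r, k i * (p i).1 :=
        Nat.add_le_add_left this _
    _ ≤ b.2 + C * (b.1 + ∑ i : Fin r, k i * (p i).1) := by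
        exact Nat.add_le_add_left (Nat.mul_le_mul_left C (Nat.le_add_left _ _)) _

theorem quadratic_set_not_semilinear :
    ¬ ∃ (N : ℕ) (L : Fin N → Set (ℕ × ℕ)),
        (∀ i, IsLinearSetNatProd (L i)) ∧
        (⋃ i, L i) = {v : ℕ × ℕ | v.2 ≤ v.1 * (v.1 - 1)} := by
  rintro ⟨N, Ls, hlin, hcov⟩
  have hsub : ∀ i, ∀ v ∈ Ls i, v.2 ≤ v.1 * (v.1 - 1) := by
    intro i v hv
    have : v ∈ ⋃ i, Ls i := Set.mem_iUnion.mpr ⟨i, hv⟩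
    rw [hcov] at this
    exact this
  choose B C hBC using fun i => linear_subset_bound (hlin i) (hsub i)
  set K := Finset.univ.sup (fun i : Fin N => B i + C i) with hK
  have hx : ((K + 2, (K + 2) * (K + 2 - 1)) : ℕ × ℕ) ∈ ⋃ i, Ls i := by
    rw [hcov]
    exact Set.mem_setOf_eq ▸ le_refl _
  obtain ⟨i, hi⟩ := Set.mem_iUnion.mp hx
  have h1 := hBC i _ hi
  have h2 : B i + C i ≤ K := hK ▸ Finset.le_sup (f := fun i : Fin N => B i + C i) (Finset.mem_univ i)
  simp only at h1
  have hsimp : (K + 2) * (K + 2 - 1) = (K + 2) * (K + 1) := by norm_num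
  rw [hsimp] at h1
  nlinarith [h1, h2]
end
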